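/- arXiv:2412.17890 — 12 statements merged into one kernel-verified Lean document; each statement's English description precedes it below -/
import Mathlib

section
/- Let (v, a) be a product two-action game with m players. A point γ ∈ [0,1]^m is an equilibrium candidate if and only if there exists a permutation π of {1,…,m} with γ ∈ EC(π); moreover, for every γ ∈ EC(π) one has {i ∈ {1,…,m} : γ_i ∈ {0,1}} = F(π), and the permutation π with γ ∈ EC(π) is unique. -/
open Finset
open scoped Classical

/-- `λ^i(γ) = (−1)^{v_i} · ∏_{j ≠ i} (γ_j − a^i_j)` for a product two-action game. -/
def lamP {m : ℕ} (v : Fin m → ℕ) (a : Fin m → Fin m → ℝ) (i : Fin m) (γ : Fin m → ℝ) : ℝ :=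
  (-1 : ℝ) ^ (v i) * ∏ j ∈ Finset.univ.erase i, (γ j - a i j)

/-- `γ ∈ [0,1]^m`. -/
def InCube {m : ℕ} (γ : Fin m → ℝ) : Prop := ∀ i, 0 ≤ γ i ∧ γ i ≤ 1

/-- Equilibrium candidate: `λ^i(γ) = 0` for every `i` with `0 < γ_i < 1`. -/
def IsEqCand {m : ℕ} (v : Fin m → ℕ) (a : Fin m → Fin m → ℝ) (γ : Fin m → ℝ) : Prop :=
  InCube γ ∧ ∀ i, 0 < γ i → γ i < 1 → lamP v a i γ = 0

/-- Nash equilibrium of the product two-action game. -/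
def IsNashP {m : ℕ} (v : Fin m → ℕ) (a : Fin m → Fin m → ℝ) (γ : Fin m → ℝ) : Prop :=
  IsEqCand v a γ ∧ (∀ i, γ i = 0 → lamP v a i γ ≤ 0) ∧ (∀ i, γ i = 1 → 0 ≤ lamP v a i γ)

/-- The coefficient conditions of a product two-action game:
`a^i_j ∈ (0,1)` and `a^{i₁}_j ≠ a^{i₂}_j` for distinct `i₁, i₂ ≠ j`. -/
def GoodCoef {m : ℕ} (a : Fin m → Fin m → ℝ) : Prop :=
  (∀ i j : Fin m, i ≠ j → 0 < a i j ∧ a i j < 1) ∧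
  (∀ j i₁ i₂ : Fin m, i₁ ≠ j → i₂ ≠ j → i₁ ≠ i₂ → a i₁ j ≠ a i₂ j)

/-- `EC(π)`. -/
def ECset {m : ℕ} (a : Fin m → Fin m → ℝ) (π : Equiv.Perm (Fin m)) : Set (Fin m → ℝ) :=
  {γ | InCube γ ∧ (∀ i, π i = i → (γ i = 0 ∨ γ i = 1)) ∧ (∀ j, π j ≠ j → γ j = a (π j) j)}

/-- `|F(π)|`, the number of fixed points of `π`. -/
def fixedCard {m : ℕ} (π : Equiv.Perm (Fin m)) : ℕ :=
  (Finset.univ.filter fun i => π i = i).card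

/-- `V(m) = Σ_{l=0}^m binom(m,l)·2^l·!(m−l)`. -/
def Vnum (m : ℕ) : ℕ :=
  ∑ l ∈ Finset.range (m + 1), Nat.choose m l * 2 ^ l * numDerangements (m - l)

/-- `σj` is the `j`-th associated permutation: it fixes `j` and sorts the
`a^i_j` (`i ≠ j`) decreasingly. -/
def IsAssoc {m : ℕ} (a : Fin m → Fin m → ℝ) (j : Fin m) (σj : Equiv.Perm (Fin m)) : Prop :=
  σj j = j ∧ ∀ i₁ i₂ : Fin m, i₁ ≠ j → i₂ ≠ j → i₁ ≠ i₂ → (σj i₁ < σj i₂ ↔ a i₂ j < a i₁ j)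

/-- The increment `Inc(γ,i)` of an equilibrium candidate `γ ∈ EC(π)` at `i ∈ F(π)`. -/
noncomputable def IncMap {m : ℕ} (v : Fin m → ℕ) (σ : Fin m → Equiv.Perm (Fin m))
    (π : Equiv.Perm (Fin m)) (γ : Fin m → ℝ) (i : Fin m) : ℕ :=
  (1 + (if γ i = 1 then 1 else 0) + v i
    + (Finset.univ.filter fun k => π k = k ∧ k ≠ i ∧ γ k = 0).card
    + ∑ j ∈ Finset.univ.filter (fun j => π j ≠ j),
        (if (σ j) i ≤ (σ j) (π j) then 1 else 0)) % 2

/-- `g(π)`: the equilibrium candidate in `EC(π)` with `γ_i = 1` for all `i ∈ F(π)`. -/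
noncomputable def gP {m : ℕ} (a : Fin m → Fin m → ℝ) (π : Equiv.Perm (Fin m)) : Fin m → ℝ :=
  fun j => if π j = j then 1 else a (π j) j

/-- A product two-action game is maximal if for every permutation `π` with
`F(π) ≠ ∅` exactly `2^{|F(π)|−1}` elements of `EC(π)` are Nash equilibria. -/
def IsMaximal {m : ℕ} (v : Fin m → ℕ) (a : Fin m → Fin m → ℝ) : Prop :=
  ∀ π : Equiv.Perm (Fin m), (∃ i, π i = i) →
    {γ ∈ ECset a π | IsNashP v a γ}.ncard = 2 ^ (fixedCard π - 1)

/-- `χ(a,b) = 1` iff `a ≥ b` (on naturals). -/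
def chiN (x y : ℕ) : ℕ := if y ≤ x then 1 else 0

/-- The permutation `δ^i` of `{1,…,m}`. -/
def deltaFun (m i j : ℕ) : ℕ :=
  if j = i then i
  else if j < i then m - i + j + chiN (m - i + j) i
  else j - i + chiN (j - i) i

/-- A point `γ ∈ [0,1]^m` is an equilibrium candidate iff it lies in some
`EC(π)`; for `γ ∈ EC(π)` the set of coordinates in `{0,1}` is exactly `F(π)`;
and the permutation `π` with `γ ∈ EC(π)` is unique. -/
theorem stmt0 {m : ℕ} (hm : 1 ≤ m) (v : Fin m → ℕ) (hv : ∀ i, v i ≤ 1)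
    (a : Fin m → Fin m → ℝ) (ha : GoodCoef a) :
    (∀ γ : Fin m → ℝ, InCube γ →
        (IsEqCand v a γ ↔ ∃ π : Equiv.Perm (Fin m), γ ∈ ECset a π)) ∧
    (∀ (π : Equiv.Perm (Fin m)) (γ : Fin m → ℝ), γ ∈ ECset a π →
        {i : Fin m | γ i = 0 ∨ γ i = 1} = {i : Fin m | π i = i}) ∧
    (∀ (π₁ π₂ : Equiv.Perm (Fin m)) (γ : Fin m → ℝ),
        γ ∈ ECset a π₁ → γ ∈ ECset a π₂ → π₁ = π₂) := by
  classical
  obtain ⟨ha1, ha2⟩ := ha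
  -- key: the boundary set of γ ∈ EC(π) equals the fixed set of π
  have key : ∀ (π : Equiv.Perm (Fin m)) (γ : Fin m → ℝ), γ ∈ ECset a π →
      {i : Fin m | γ i = 0 ∨ γ i = 1} = {i : Fin m | π i = i} := by
    intro π γ hγ
    obtain ⟨hcube, hfix, hmove⟩ := hγ
    ext i
    simp only [Set.mem_setOf_eq]
    constructor
    · intro hbd
      by_contra hne
      have hval := hmove i hne
      have h01 := ha1 (π i) i hne
      rcases hbd with h | h <;> rw [h] at hval <;> linarith [h01.1, h01.2]
    · intro h; exact hfix i h
  refine ⟨?_, key, ?_⟩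
  · -- equivalence
    intro γ hcube
    constructor
    · rintro ⟨-, hcand⟩
      -- for each interior i there is j ≠ i with γ j = a i j
      have hEx : ∀ i, 0 < γ i → γ i < 1 → ∃ j, j ≠ i ∧ γ j = a i j := by
        intro i h0 h1
        have h := hcand i h0 h1
        rw [lamP, mul_eq_zero] at h
        rcases h with h | h
        · exact absurd h (pow_ne_zero _ (by norm_num))
        · obtain ⟨j, hj, hz⟩ := Finset.prod_eq_zero_iff.mp h
          exact ⟨j, Finset.ne_of_mem_erase hj, by linarith⟩
      set f : Fin m → Fin m := fun i =>
        if h : 0 < γ i ∧ γ i < 1 then Classical.choose (hEx i h.1 h.2) else i with hf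
      have hfI : ∀ i (h : 0 < γ i ∧ γ i < 1), f i ≠ i ∧ γ (f i) = a i (f i) := by
        intro i h
        have : f i = Classical.choose (hEx i h.1 h.2) := by simp [hf, h]
        rw [this]
        exact Classical.choose_spec (hEx i h.1 h.2)
      have hfB : ∀ i, ¬(0 < γ i ∧ γ i < 1) → f i = i := by
        intro i h; simp [hf, h]
      have hfint : ∀ i (h : 0 < γ i ∧ γ i < 1), 0 < γ (f i) ∧ γ (f i) < 1 := by
        intro i h
        have := hfI i h
        have h01 := ha1 i (f i) (Ne.symm this.1)
        rw [this.2]; exact h01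
      have hinj : Function.Injective f := by
        intro x y hxy
        by_cases hx : 0 < γ x ∧ γ x < 1 <;> by_cases hy : 0 < γ y ∧ γ y < 1
        · by_contra hne
          have h1 := hfI x hx
          have h2 := hfI y hy
          exact ha2 (f x) x y h1.1.symm (hxy ▸ h2.1.symm) hne
            (by rw [← h1.2, hxy, h2.2])
        · exact absurd (hfB y hy ▸ hxy ▸ hfint x hx) hy
        · exact absurd ((hfB x hx ▸ hxy) ▸ hfint y hy) hx
        · rw [hfB x hx, hfB y hy] at hxy; exact hxy
      have hbij : Function.Bijective f := Finite.injective_iff_bijective.mp hinj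
      set e := Equiv.ofBijective f hbij with he
      refine ⟨e.symm, hcube, ?_, ?_⟩
      · intro i hi
        have hfi : f i = i := by
          have h2 := congrArg e hi
          rw [Equiv.apply_symm_apply] at h2
          exact h2.symm
        have hint : ¬(0 < γ i ∧ γ i < 1) := fun h => (hfI i h).1 hfi
        push_neg at hint
        rcases lt_or_ge 0 (γ i) with h0 | h0
        · right; linarith [hint h0, (hcube i).2]
        · left; linarith [(hcube i).1]
      · intro j hj
        set i := e.symm j with hi
        have hfij : f i = j := e.apply_symm_apply j
        have hint : 0 < γ i ∧ γ i < 1 := by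
          by_contra h
          have hij : (i : Fin m) = j := by rw [← hfB i h]; exact hfij
          exact hj hij
        have := (hfI i hint).2
        rw [hfij] at this
        exact this
    · rintro ⟨π, hπ⟩
      refine ⟨hcube, fun i h0 h1 => ?_⟩
      obtain ⟨-, hfix, hmove⟩ := hπ
      have hπi : π i ≠ i := by
        intro h
        rcases hfix i h with h' | h' <;> rw [h'] at h0 h1 <;> linarith
      set j := π.symm i with hj
      have hπj : π j = i := π.apply_symm_apply i
      have hji : j ≠ i := by
        intro h; rw [h] at hπj; exact hπi hπj
      have hγj : γ j = a i j := by
        have := hmove j (by rw [hπj]; exact hji.symm)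
        rwa [hπj] at this
      rw [lamP]
      apply mul_eq_zero_of_right
      exact Finset.prod_eq_zero (Finset.mem_erase.mpr ⟨hji, Finset.mem_univ j⟩)
        (by rw [hγj]; ring)
  · -- uniqueness
    intro π₁ π₂ γ h₁ h₂
    have hsets : {i : Fin m | π₁ i = i} = {i : Fin m | π₂ i = i} := by
      rw [← key π₁ γ h₁, key π₂ γ h₂]
    have hsets' : ∀ i, π₁ i = i ↔ π₂ i = i := fun i =>
      Set.ext_iff.mp hsets i
    refine Equiv.ext fun x => ?_
    by_cases hx : π₁ x = x
    · rw [hx, ((hsets' x).mp hx)]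
    · have hx2 : π₂ x ≠ x := fun h => hx ((hsets' x).mpr h)
      have e1 := h₁.2.2 x hx
      have e2 := h₂.2.2 x hx2
      by_contra hne
      exact ha2 x (π₁ x) (π₂ x) hx hx2 hne (by rw [← e1, ← e2])
end

section
/- Let (v, a) be a product two-action game with m players. The sets EC(π), as π ranges over all permutations of {1,…,m}, are pairwise disjoint; each EC(π) has exactly 2^{|F(π)|} elements; and the total number of equilibrium candidates equals V(m) = Σ_{l=0}^m binom(m,l)·2^l·!(m−l). -/
open Finset
open scoped Classical

/-! An equilibrium candidate determines its permutation: the coordinates with `γ_i ∈ {0,1}` are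
the fixed points, and an interior coordinate `j` satisfies `γ_j = a^i_j` for at most one `i ≠ j`,
which is `π(j)`. For interior `i`, `λ^i(γ) = 0` provides such a `j`, so `j ↦ i` is a bijection of
the interior coordinates. Grouping permutations by their fixed-point set `S`, there are
`!(m - |S|)` of them, each contributing `2^|S|` candidates. -/

open Equiv Function

section FixedPoints

variable {α : Type*} [Fintype α] [DecidableEq α]

theorem card_filter_perm_fixed_eq (S : Finset α) :
    #{σ : Perm α | ({x | σ x = x} : Finset α) = S} = numDerangements (Fintype.card α - #S) := by
  calc #{σ : Perm α | ({x | σ x = x} : Finset α) = S}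
      = Fintype.card {σ : Perm α // ∀ x, ¬x ∉ S ↔ x ∈ fixedPoints σ} := by
        rw [Fintype.card_subtype]
        congr 1
        ext σ
        simp only [Finset.ext_iff, mem_filter, mem_univ, true_and, mem_fixedPoints, IsFixedPt,
          not_not]
        exact forall_congr' fun _ => Iff.comm
    _ = Fintype.card (derangements {x // x ∉ S}) :=
        (Fintype.card_congr (derangements.subtypeEquiv _)).symm
    _ = numDerangements (Fintype.card α - #S) := by
        rw [card_derangements_eq_numDerangements, Fintype.card_subtype_compl, Fintype.card_coe]

theorem sum_perm_apply_card_fixed {M : Type*} [AddCommMonoid M] (f : ℕ → M) :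
    ∑ σ : Perm α, f #{x | σ x = x} = ∑ l ∈ range (Fintype.card α + 1),
      ((Fintype.card α).choose l * numDerangements (Fintype.card α - l)) • f l := by
  have hmaps : ∀ σ ∈ (univ : Finset (Perm α)), ({x | σ x = x} : Finset α) ∈ univ.powerset :=
    fun σ _ => mem_powerset.2 (subset_univ _)
  rw [← sum_fiberwise_of_maps_to hmaps]
  calc _ = ∑ S ∈ (univ : Finset α).powerset, numDerangements (Fintype.card α - #S) • f #S := by
        refine sum_congr rfl fun S _ => ?_
        rw [sum_congr rfl fun σ hσ => by rw [(mem_filter.1 hσ).2], sum_const,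
          card_filter_perm_fixed_eq]
    _ = _ := by
        rw [sum_powerset_apply_card (fun l => numDerangements (Fintype.card α - l) • f l),
          card_univ]
        simp only [smul_smul]

end FixedPoints

section EquilibriumCandidates

variable {m : ℕ} {a : Fin m → Fin m → ℝ} {π : Perm (Fin m)} {γ : Fin m → ℝ}

theorem lamP_eq_zero_iff (v : Fin m → ℕ) (i : Fin m) :
    lamP v a i γ = 0 ↔ ∃ j ≠ i, γ j = a i j := by
  simp [lamP, prod_eq_zero_iff, sub_eq_zero]

theorem fixed_iff_of_mem_ECset (ha : ∀ i j, i ≠ j → 0 < a i j ∧ a i j < 1)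
    (hγ : γ ∈ ECset a π) (j : Fin m) : π j = j ↔ γ j = 0 ∨ γ j = 1 := by
  refine ⟨hγ.2.1 j, fun h => by_contra fun hj => ?_⟩
  have := ha _ _ hj
  rw [hγ.2.2 j hj] at h
  rcases h with h | h <;> linarith

theorem disjoint_ECset (ha : GoodCoef a) {π₁ π₂ : Perm (Fin m)} (h : π₁ ≠ π₂) :
    Disjoint (ECset a π₁) (ECset a π₂) := by
  refine Set.disjoint_left.2 fun γ hγ₁ hγ₂ => ?_
  obtain ⟨j, hj⟩ : ∃ j, π₁ j ≠ π₂ j := not_forall.1 fun h' => h (Equiv.ext h')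
  have hfix : π₁ j = j ↔ π₂ j = j :=
    (fixed_iff_of_mem_ECset ha.1 hγ₁ j).trans (fixed_iff_of_mem_ECset ha.1 hγ₂ j).symm
  have h₁ : π₁ j ≠ j := fun h₁ => hj (h₁.trans (hfix.1 h₁).symm)
  have h₂ : π₂ j ≠ j := fun h₂ => h₁ (hfix.2 h₂)
  exact ha.2 j _ _ h₁ h₂ hj ((hγ₁.2.2 j h₁).symm.trans (hγ₂.2.2 j h₂))

noncomputable def ecFinset (a : Fin m → Fin m → ℝ) (π : Perm (Fin m)) :
    Finset (Fin m → ℝ) :=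
  Fintype.piFinset fun j => if π j = j then {0, 1} else {a (π j) j}

theorem coe_ecFinset (ha : ∀ i j, i ≠ j → 0 < a i j ∧ a i j < 1) (π : Perm (Fin m)) :
    (ecFinset a π : Set (Fin m → ℝ)) = ECset a π := by
  ext γ
  simp only [ecFinset, mem_coe, Fintype.mem_piFinset, ECset, InCube, Set.mem_ofPred_eq]
  constructor
  · intro h
    have hfix : ∀ j, π j = j → γ j = 0 ∨ γ j = 1 := fun j hj => by simpa [hj] using h j
    have hmov : ∀ j, π j ≠ j → γ j = a (π j) j := fun j hj => by simpa [hj] using h j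
    refine ⟨fun j => ?_, hfix, hmov⟩
    by_cases hj : π j = j
    · rcases hfix j hj with h | h <;> rw [h] <;> norm_num
    · have := ha _ _ hj
      rw [hmov j hj]
      constructor <;> linarith
  · rintro ⟨-, hfix, hmov⟩ j
    split_ifs with hj
    · simpa using hfix j hj
    · simpa using hmov j hj

theorem card_ecFinset (a : Fin m → Fin m → ℝ) (π : Perm (Fin m)) :
    #(ecFinset a π) = 2 ^ fixedCard π := by
  simp only [ecFinset, Fintype.card_piFinset, apply_ite card, card_pair zero_ne_one,
    card_singleton, prod_ite, prod_const, one_pow, mul_one, fixedCard]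

theorem isEqCand_of_mem_ECset (v : Fin m → ℕ) (ha : ∀ i j, i ≠ j → 0 < a i j ∧ a i j < 1)
    (hγ : γ ∈ ECset a π) : IsEqCand v a γ := by
  refine ⟨hγ.1, fun i h₀ h₁ => ?_⟩
  have hi : π i ≠ i := fun hfix => by
    rcases (fixed_iff_of_mem_ECset ha hγ i).1 hfix with h | h <;> simp [h] at h₀ h₁
  have hji : π.symm i ≠ i := fun h => hi (π.symm_apply_eq.1 h).symm
  have hγj := hγ.2.2 (π.symm i) (by rw [π.apply_symm_apply]; exact hji.symm)
  rw [π.apply_symm_apply] at hγj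
  exact (lamP_eq_zero_iff v i).2 ⟨π.symm i, hji, hγj⟩

theorem exists_mem_ECset_of_isEqCand {v : Fin m → ℕ} (ha : GoodCoef a) (hγ : IsEqCand v a γ) :
    ∃ π, γ ∈ ECset a π := by
  let P : Fin m → Prop := fun j => 0 < γ j ∧ γ j < 1
  have hcover : ∀ i : Subtype P, ∃ j : Subtype P, (j : Fin m) ≠ i ∧ γ j = a i j := by
    rintro ⟨i, hi⟩
    obtain ⟨j, hji, hγj⟩ := (lamP_eq_zero_iff v i).1 (hγ.2 i hi.1 hi.2)
    exact ⟨⟨j, by simpa only [P, hγj] using ha.1 i j hji.symm⟩, hji, hγj⟩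
  choose w hw_ne hw using hcover
  have hw_inj : Injective w := fun i₁ i₂ h => by_contra fun hne =>
    ha.2 (w i₁) i₁ i₂ (hw_ne i₁).symm (h ▸ (hw_ne i₂).symm) (Subtype.coe_ne_coe.2 hne)
      ((hw i₁).symm.trans (h ▸ hw i₂))
  let τ : Perm (Subtype P) := Equiv.ofBijective w (Finite.injective_iff_bijective.1 hw_inj)
  refine ⟨Perm.ofSubtype τ.symm, hγ.1, fun i hi => ?_, fun j hj => ?_⟩
  · have hPi : ¬P i := fun hPi => by
      rw [Perm.ofSubtype_apply_of_mem _ hPi] at hi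
      have hk : w (τ.symm ⟨i, hPi⟩) = ⟨i, hPi⟩ := τ.apply_symm_apply _
      exact hw_ne _ (by rw [hk]; exact hi.symm)
    rcases (hγ.1 i).1.eq_or_lt with h₀ | h₀
    · exact Or.inl h₀.symm
    · exact Or.inr (by_contra fun h₁ => hPi ⟨h₀, lt_of_le_of_ne (hγ.1 i).2 h₁⟩)
  · have hPj : P j := by_contra fun h => hj (Perm.ofSubtype_apply_of_not_mem _ h)
    have hk : w (τ.symm ⟨j, hPj⟩) = ⟨j, hPj⟩ := τ.apply_symm_apply _
    rw [Perm.ofSubtype_apply_of_mem _ hPj]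
    simpa [hk] using hw (τ.symm ⟨j, hPj⟩)

end EquilibriumCandidates

theorem stmt1_general {m : ℕ} (v : Fin m → ℕ)
    (a : Fin m → Fin m → ℝ) (ha : GoodCoef a) :
    (∀ π₁ π₂ : Equiv.Perm (Fin m), π₁ ≠ π₂ → Disjoint (ECset a π₁) (ECset a π₂)) ∧
    (∀ π : Equiv.Perm (Fin m), (ECset a π).ncard = 2 ^ fixedCard π) ∧
    {γ : Fin m → ℝ | IsEqCand v a γ}.ncard = Vnum m := by
  have hcand : {γ : Fin m → ℝ | IsEqCand v a γ} = ↑(univ.biUnion (ecFinset a)) := by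
    ext γ
    simp only [coe_biUnion, coe_univ, Set.mem_univ, Set.iUnion_true, coe_ecFinset ha.1,
      Set.mem_iUnion, Set.mem_ofPred_eq]
    exact ⟨exists_mem_ECset_of_isEqCand ha, fun ⟨_, hπ⟩ => isEqCand_of_mem_ECset v ha.1 hπ⟩
  have hdisj : ((univ : Finset (Perm (Fin m))) : Set (Perm (Fin m))).PairwiseDisjoint
      (ecFinset a) := fun π₁ _ π₂ _ h => by
    rw [onFun, ← disjoint_coe, coe_ecFinset ha.1, coe_ecFinset ha.1]
    exact disjoint_ECset ha h
  refine ⟨fun _ _ => disjoint_ECset ha, fun π => ?_, ?_⟩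
  · rw [← coe_ecFinset ha.1, Set.ncard_coe_finset, card_ecFinset]
  · rw [hcand, Set.ncard_coe_finset, card_biUnion hdisj]
    simp only [card_ecFinset, fixedCard, sum_perm_apply_card_fixed, Fintype.card_fin, Vnum,
      smul_eq_mul]
    exact sum_congr rfl fun l _ => by ring

/-- The sets `EC(π)` are pairwise disjoint, `|EC(π)| = 2^{|F(π)|}`, and
the total number of equilibrium candidates is `V(m) = Σ_{l=0}^m binom(m,l)·2^l·!(m−l)`. -/
theorem stmt1 {m : ℕ} (hm : 1 ≤ m) (v : Fin m → ℕ) (hv : ∀ i, v i ≤ 1)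
    (a : Fin m → Fin m → ℝ) (ha : GoodCoef a) :
    (∀ π₁ π₂ : Equiv.Perm (Fin m), π₁ ≠ π₂ → Disjoint (ECset a π₁) (ECset a π₂)) ∧
    (∀ π : Equiv.Perm (Fin m), (ECset a π).ncard = 2 ^ fixedCard π) ∧
    {γ : Fin m → ℝ | IsEqCand v a γ}.ncard = Vnum m :=
  stmt1_general v a ha
end

section
/- For every integer m ≥ 0, Σ_{l=0}^m binom(m,l)·2^l·!(m−l) = Σ_{l=0}^m m!/l!. -/
open Finset
open scoped Classical

/-!
Both sides count the pairs `(σ, S)` of a permutation `σ` of `m` points and a set `S` of fixed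
points of `σ`. Grouping by the fixed-point set of `σ`, an `l`-set outside of which `σ` is a
derangement, gives `Σ binom(m,l)·2^l·!(m−l)`; grouping by `S`, outside of which `σ` is arbitrary,
gives `Σ binom(m,l)·(m−l)! = Σ m!/l!`.
-/

open scoped Nat

theorem Nat.choose_mul_factorial_sub_eq_factorial_div {n k : ℕ} (h : k ≤ n) :
    n.choose k * (n - k)! = n ! / k ! := by
  symm
  apply Nat.div_eq_of_eq_mul_left k.factorial_pos
  rw [← Nat.choose_mul_factorial_mul_factorial h]
  ring

namespace Equiv.Perm

variable {α : Type*} [Fintype α] [DecidableEq α]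

theorem card_filter_compl_support_eq (s : Finset α) :
    #{σ : Perm α | σ.supportᶜ = s} = numDerangements (Fintype.card α - #s) := by
  rw [← Fintype.card_coe s, ← Fintype.card_subtype_compl, ← card_derangements_eq_numDerangements,
    ← Fintype.card_subtype, Fintype.card_congr (derangements.subtypeEquiv (· ∉ s))]
  refine Fintype.card_congr (Equiv.subtypeEquivRight fun σ => ?_)
  simp [Finset.ext_iff, Function.IsFixedPt, iff_comm]

theorem card_filter_subset_compl_support (s : Finset α) :
    #{σ : Perm α | s ⊆ σ.supportᶜ} = (Fintype.card α - #s)! := by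
  rw [← Fintype.card_coe s, ← Fintype.card_subtype_compl, ← Fintype.card_perm,
    ← Fintype.card_subtype, Fintype.card_congr (Perm.subtypeEquivSubtypePerm (· ∉ s))]
  refine Fintype.card_congr (Equiv.subtypeEquivRight fun σ => ?_)
  simp [subset_iff]

theorem sum_apply_card_compl_support {M : Type*} [AddCommMonoid M] (f : ℕ → M) :
    ∑ σ : Perm α, f #σ.supportᶜ =
      ∑ k ∈ range (Fintype.card α + 1),
        ((Fintype.card α).choose k * numDerangements (Fintype.card α - k)) • f k := by
  rw [← sum_fiberwise univ (fun σ : Perm α => σ.supportᶜ), ← powerset_univ]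
  have fiber (s : Finset α) : ∑ σ : Perm α with σ.supportᶜ = s, f #σ.supportᶜ =
      numDerangements (Fintype.card α - #s) • f #s := by
    rw [sum_congr rfl fun σ hσ => by rw [(mem_filter.1 hσ).2], sum_const,
      card_filter_compl_support_eq]
  simp only [fiber, sum_powerset_apply_card (fun k => numDerangements (Fintype.card α - k) • f k),
    card_univ, mul_smul]

theorem sum_two_pow_card_compl_support :
    ∑ σ : Perm α, 2 ^ #σ.supportᶜ =
      ∑ k ∈ range (Fintype.card α + 1), (Fintype.card α).choose k * (Fintype.card α - k)! := by
  calc ∑ σ : Perm α, 2 ^ #σ.supportᶜ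
      = ∑ σ : Perm α, ∑ s ∈ σ.supportᶜ.powerset, 1 := by simp
    _ = ∑ s : Finset α, ∑ σ : Perm α with s ⊆ σ.supportᶜ, 1 :=
        sum_comm' fun σ s => by simp
    _ = ∑ s ∈ (univ : Finset α).powerset, (Fintype.card α - #s)! := by
        simp [card_filter_subset_compl_support]
    _ = _ := by
        rw [sum_powerset_apply_card (fun k => (Fintype.card α - k)!), card_univ]
        simp only [smul_eq_mul]

end Equiv.Perm

/-- `Σ_{l=0}^m binom(m,l)·2^l·!(m−l) = Σ_{l=0}^m m!/l!`. -/
theorem stmt2 (m : ℕ) :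
    Vnum m = ∑ l ∈ Finset.range (m + 1), Nat.factorial m / Nat.factorial l := by
  calc Vnum m
      = ∑ σ : Equiv.Perm (Fin m), 2 ^ #σ.supportᶜ := by
        rw [Equiv.Perm.sum_apply_card_compl_support, Fintype.card_fin, Vnum]
        refine sum_congr rfl fun l _ => ?_
        rw [smul_eq_mul]
        ring
    _ = ∑ l ∈ range (m + 1), m.choose l * (m - l)! := by
        rw [Equiv.Perm.sum_two_pow_card_compl_support, Fintype.card_fin]
    _ = _ := sum_congr rfl fun l hl =>
        Nat.choose_mul_factorial_sub_eq_factorial_div (Nat.lt_succ_iff.mp (mem_range.mp hl))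
end

section
/- Let (v, a) be a product two-action game with m players, let π be a permutation of {1,…,m}, let γ ∈ EC(π), and let i ∈ F(π). Then λ^i(γ) ≠ 0, and the sign of λ^i(γ) is (−1)^e, where e := v_i + |{k ∈ {1,…,m} ∖ {i} : γ_k = 0}| + Σ_{j ∉ F(π)} χ(σ^j(π(j)), σ^j(i)). -/
open Finset
open scoped Classical

/-- For `γ ∈ EC(π)` and `i ∈ F(π)`, `λ^i(γ) ≠ 0`, and its sign is
`(−1)^e` with `e = v_i + |{k ≠ i : γ_k = 0}| + Σ_{j ∉ F(π)} χ(σ^j(π(j)), σ^j(i))`. -/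
theorem stmt4 {m : ℕ} (hm : 1 ≤ m) (v : Fin m → ℕ) (hv : ∀ i, v i ≤ 1)
    (a : Fin m → Fin m → ℝ) (ha : GoodCoef a)
    (σ : Fin m → Equiv.Perm (Fin m)) (hσ : ∀ j, IsAssoc a j (σ j))
    (π : Equiv.Perm (Fin m)) (γ : Fin m → ℝ) (hγ : γ ∈ ECset a π)
    (i : Fin m) (hi : π i = i) :
    lamP v a i γ ≠ 0 ∧
    Real.sign (lamP v a i γ) =
      (-1 : ℝ) ^ (v i + (Finset.univ.filter fun k => k ≠ i ∧ γ k = 0).card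
        + ∑ j ∈ Finset.univ.filter (fun j => π j ≠ j),
            (if (σ j) i ≤ (σ j) (π j) then 1 else 0)) := by
  classical
  obtain ⟨hcube, hfix, hmove⟩ := hγ
  set s : Finset (Fin m) := Finset.univ.erase i with hs
  set n : Fin m → ℕ := fun j => if γ j - a i j < 0 then 1 else 0 with hn
  have hfac : ∀ j ∈ s, 0 < (-1:ℝ) ^ (n j) * (γ j - a i j) := by
    intro j hj
    have hji : j ≠ i := Finset.ne_of_mem_erase hj
    have haij : 0 < a i j ∧ a i j < 1 := ha.1 i j hji.symm
    have hne : γ j - a i j ≠ 0 := by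
      by_cases hpj : π j = j
      · rcases hfix j hpj with h0 | h1
        · rw [h0, zero_sub, neg_ne_zero]; exact ne_of_gt haij.1
        · rw [h1]; exact sub_ne_zero.mpr (ne_of_gt haij.2)
      · have hpji : π j ≠ i := fun h => hji (π.injective (h.trans hi.symm))
        have := ha.2 j (π j) i hpj hji.symm hpji
        rw [hmove j hpj]
        exact sub_ne_zero.mpr this
    rcases lt_or_gt_of_ne hne with hlt | hgt
    · have : n j = 1 := if_pos hlt
      rw [this, pow_one]
      nlinarith
    · have : n j = 0 := if_neg (not_lt.mpr (le_of_lt hgt))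
      rw [this, pow_zero, one_mul]
      exact hgt
  -- termwise decomposition of n
  have hterm : ∀ j ∈ s, n j = (if γ j = 0 then 1 else 0)
      + (if π j ≠ j ∧ (σ j) i ≤ (σ j) (π j) then 1 else 0) := by
    intro j hj
    have hji : j ≠ i := Finset.ne_of_mem_erase hj
    have haij : 0 < a i j ∧ a i j < 1 := ha.1 i j hji.symm
    by_cases hpj : π j = j
    · rcases hfix j hpj with h0 | h1
      · simp [hn, h0, haij.1, hpj]
      · have : ¬ (γ j - a i j < 0) := by rw [h1]; linarith [haij.2]
        simp only [hn, hpj, ne_eq, not_true_eq_false, false_and, if_false, if_neg this, h1]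
        norm_num
    · have hpji : π j ≠ i := fun h => hji (π.injective (h.trans hi.symm))
      have hγj : γ j = a (π j) j := hmove j hpj
      have hγj0 : γ j ≠ 0 := by
        rw [hγj]; exact ne_of_gt (ha.1 (π j) j hpj).1
      have hiff : (σ j) i < (σ j) (π j) ↔ a (π j) j < a i j :=
        (hσ j).2 i (π j) hji.symm hpj (Ne.symm hpji)
      have hlei : (σ j) i ≤ (σ j) (π j) ↔ (σ j) i < (σ j) (π j) := by
        constructor
        · intro h
          refine lt_of_le_of_ne h (fun he => hpji ((σ j).injective ?_))
          exact Fin.ext (by omega)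
        · exact le_of_lt
      by_cases hc : γ j - a i j < 0
      · have : a (π j) j < a i j := by rw [hγj] at hc; linarith
        have h2 : (σ j) i ≤ (σ j) (π j) := hlei.mpr (hiff.mpr this)
        have hand : π j ≠ j ∧ (σ j) i ≤ (σ j) (π j) := ⟨hpj, h2⟩
        simp only [hn, if_pos hc, if_neg hγj0, if_pos hand]
      · have h1 : ¬ a (π j) j < a i j := by rw [hγj] at hc; intro h; exact hc (by linarith)
        have h2 : ¬ (σ j) i ≤ (σ j) (π j) := fun h => h1 (hiff.mp (hlei.mp h))
        have : ¬ (π j ≠ j ∧ (σ j) i ≤ (σ j) (π j)) := fun hh => h2 hh.2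
        simp only [hn, if_neg hc, if_neg hγj0, if_neg this]
  set E₁ : ℕ := (Finset.univ.filter fun k => k ≠ i ∧ γ k = 0).card with hE1
  set E₂ : ℕ := ∑ j ∈ Finset.univ.filter (fun j => π j ≠ j),
      (if (σ j) i ≤ (σ j) (π j) then 1 else 0) with hE2
  have hsum : E₁ + E₂ = ∑ j ∈ s, n j := by
    rw [Finset.sum_congr rfl hterm, Finset.sum_add_distrib]
    congr 1
    · rw [hE1]
      have hseteq : (Finset.univ.filter fun k => k ≠ i ∧ γ k = 0)
          = s.filter (fun j => γ j = 0) := by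
        ext k
        simp only [Finset.mem_filter, Finset.mem_univ, true_and, hs, Finset.mem_erase]
        tauto
      rw [hseteq, Finset.card_filter, Finset.sum_congr rfl]
      intro j hj; rfl
    · rw [hE2]
      have hseteq : (Finset.univ.filter fun j => π j ≠ j)
          = s.filter (fun j => π j ≠ j) := by
        ext k
        simp only [Finset.mem_filter, Finset.mem_univ, true_and, hs, Finset.mem_erase,
          and_iff_right_iff_imp]
        constructor
        · intro h; exact ⟨⟨fun he => h (by rw [he, hi]), trivial⟩, h⟩
        · intro h; exact h.2
      rw [hseteq, Finset.sum_filter]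
      simp [ite_and]
  -- main positivity
  have hlam : lamP v a i γ = (-1:ℝ) ^ (v i) * ∏ j ∈ s, (γ j - a i j) := rfl
  have key : 0 < (-1:ℝ) ^ (v i + E₁ + E₂) * lamP v a i γ := by
    have hpos : 0 < ∏ j ∈ s, ((-1:ℝ) ^ (n j) * (γ j - a i j)) :=
      Finset.prod_pos hfac
    have heq : (-1:ℝ) ^ (v i + E₁ + E₂) * lamP v a i γ
        = ∏ j ∈ s, ((-1:ℝ) ^ (n j) * (γ j - a i j)) := by
      rw [Finset.prod_mul_distrib, Finset.prod_pow_eq_pow_sum, ← hsum, hlam, ← mul_assoc,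
        ← pow_add]
      have h2 : v i + E₁ + E₂ + v i = 2 * v i + (E₁ + E₂) := by ring
      rw [h2, pow_add, pow_mul, neg_one_sq, one_pow, one_mul]
    rw [heq]; exact hpos
  have hne : lamP v a i γ ≠ 0 := by
    intro h; rw [h, mul_zero] at key; exact lt_irrefl 0 key
  refine ⟨hne, ?_⟩
  rcases Nat.even_or_odd (v i + E₁ + E₂) with he | ho
  · rw [he.neg_one_pow] at key ⊢
    rw [one_mul] at key
    exact Real.sign_of_pos key
  · rw [ho.neg_one_pow] at key ⊢
    have : lamP v a i γ < 0 := by nlinarith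
    exact Real.sign_of_neg this
end

section
/- Let (v, a) be a product two-action game with m players and let π be a permutation of {1,…,m} with F(π) ≠ ∅. An equilibrium candidate γ ∈ EC(π) is a Nash equilibrium if and only if Inc(γ,i) = 0 for every i ∈ F(π). -/
open Finset
open scoped Classical

lemma prod_pos_iff_even' {ι : Type*} (s : Finset ι) (f : ι → ℝ)
    (hf : ∀ j ∈ s, f j ≠ 0) :
    (0 < ∏ j ∈ s, f j ↔ Even (s.filter fun j => f j < 0).card) := by
  classical
  induction s using Finset.induction_on with
  | empty => simp
  | @insert x s hx ih =>
    have hfx := hf x (mem_insert_self x s)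
    have hfs : ∀ j ∈ s, f j ≠ 0 := fun j hj => hf j (mem_insert_of_mem hj)
    have hps : (∏ j ∈ s, f j) ≠ 0 := Finset.prod_ne_zero_iff.2 hfs
    rw [Finset.prod_insert hx, Finset.filter_insert]
    rcases lt_or_gt_of_ne hfx with hneg | hpos
    · rw [if_pos hneg, Finset.card_insert_of_notMem (by simp [hx])]
      rw [mul_pos_iff]
      constructor
      · rintro (⟨h1, _⟩ | ⟨_, h2⟩)
        · exact absurd h1 (not_lt.2 hneg.le)
        · have := (ih hfs)
          rw [Nat.even_add_one]
          intro hE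
          exact absurd (this.2 hE) (not_lt.2 h2.le)
      · intro hE
        rw [Nat.even_add_one] at hE
        have : ¬ 0 < ∏ j ∈ s, f j := fun h => hE ((ih hfs).1 h)
        exact Or.inr ⟨hneg, lt_of_le_of_ne (not_lt.1 this) hps⟩
    · rw [if_neg (not_lt.2 hpos.le)]
      rw [mul_pos_iff, ← ih hfs]
      constructor
      · rintro (⟨_, h⟩ | ⟨h, _⟩)
        · exact h
        · exact absurd h (not_lt.2 hpos.le)
      · exact fun h => Or.inl ⟨hpos, h⟩


/-- For `π` with `F(π) ≠ ∅`, an equilibrium candidate `γ ∈ EC(π)` is a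
Nash equilibrium iff `Inc(γ,i) = 0` for every `i ∈ F(π)`. -/
theorem stmt5 {m : ℕ} (hm : 1 ≤ m) (v : Fin m → ℕ) (hv : ∀ i, v i ≤ 1)
    (a : Fin m → Fin m → ℝ) (ha : GoodCoef a)
    (σ : Fin m → Equiv.Perm (Fin m)) (hσ : ∀ j, IsAssoc a j (σ j))
    (π : Equiv.Perm (Fin m)) (hF : ∃ i, π i = i)
    (γ : Fin m → ℝ) (hγ : γ ∈ ECset a π) :
    IsNashP v a γ ↔ ∀ i, π i = i → IncMap v σ π γ i = 0 := by
  obtain ⟨hcube, hfix, hnf⟩ := hγ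
  -- nonfixed coordinates lie strictly in (0,1)
  have hγ01 : ∀ j : Fin m, π j ≠ j → 0 < γ j ∧ γ j < 1 := by
    intro j hj
    rw [hnf j hj]
    exact ha.1 (π j) j hj
  -- lamP vanishes at nonfixed indices
  have hlam0 : ∀ i : Fin m, π i ≠ i → lamP v a i γ = 0 := by
    intro i hi
    have hji : π (π.symm i) = i := π.apply_symm_apply i
    have hne : π.symm i ≠ i := by
      intro h; rw [h] at hji; exact hi hji
    have hnef : π (π.symm i) ≠ π.symm i := by
      rw [hji]; exact fun h => hne h.symm
    have hz : γ (π.symm i) - a i (π.symm i) = 0 := by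
      rw [hnf _ hnef, hji]; ring
    unfold lamP
    rw [Finset.prod_eq_zero (Finset.mem_erase.2 ⟨hne, mem_univ _⟩) hz, mul_zero]
  -- notation
  have hsumcard : ∀ i : Fin m,
      (∑ j ∈ Finset.univ.filter (fun j => π j ≠ j), (if (σ j) i ≤ (σ j) (π j) then 1 else 0)) = ((Finset.univ.filter fun j => π j ≠ j).filter fun j => (σ j) i ≤ (σ j) (π j)).card := by
    intro i
    simp [Finset.sum_boole]
  -- key sign lemma at fixed indices
  have hsign : ∀ i : Fin m, π i = i →
      lamP v a i γ ≠ 0 ∧ (0 < lamP v a i γ ↔ Even (v i + ((Finset.univ.filter fun k => π k = k ∧ k ≠ i ∧ γ k = 0).card + ((Finset.univ.filter fun j => π j ≠ j).filter fun j => (σ j) i ≤ (σ j) (π j)).card))) := by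
    intro i hi
    -- facts about indices
    have hπji : ∀ j : Fin m, π j ≠ j → π j ≠ i := by
      intro j hj h
      have hji2 : j = i := π.injective (by rw [h, hi])
      exact hj (by rw [hji2, hi])
    have hij : ∀ j : Fin m, π j ≠ j → i ≠ j := by
      intro j hj h; exact hj (h ▸ hi)
    -- every factor is nonzero
    have hfac : ∀ j ∈ Finset.univ.erase i, γ j - a i j ≠ 0 := by
      intro j hj
      have hji : j ≠ i := (Finset.mem_erase.1 hj).1
      by_cases hjf : π j = j
      · have haij := ha.1 i j hji.symm
        rcases hfix j hjf with h0 | h1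
        · rw [h0]; intro h; nlinarith [haij.1]
        · rw [h1]; intro h; nlinarith [haij.2]
      · rw [hnf j hjf]
        exact sub_ne_zero.2 (ha.2 j (π j) i hjf (hij j hjf) (hπji j hjf))
    -- counting the negative factors
    have hcount : ((Finset.univ.erase i).filter fun j => γ j - a i j < 0) =
        (Finset.univ.filter fun k => π k = k ∧ k ≠ i ∧ γ k = 0) ∪
        ((Finset.univ.filter fun j => π j ≠ j).filter fun j => (σ j) i ≤ (σ j) (π j)) := by
      ext j
      simp only [Finset.mem_filter, Finset.mem_union, Finset.mem_erase, Finset.mem_univ,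
        true_and, and_true]
      constructor
      · rintro ⟨hji, hlt⟩
        by_cases hjf : π j = j
        · left
          refine ⟨hjf, hji, ?_⟩
          rcases hfix j hjf with h0 | h1
          · exact h0
          · exfalso; rw [h1] at hlt; linarith [(ha.1 i j hji.symm).2]
        · right
          refine ⟨hjf, ?_⟩
          rw [hnf j hjf, sub_neg] at hlt
          have hlt' : (σ j) i < (σ j) (π j) :=
            ((hσ j).2 i (π j) hji.symm hjf (fun h => (hπji j hjf) h.symm)).2 hlt
          exact hlt'.le
      · rintro (⟨hjf, hji, h0⟩ | ⟨hjf, hle⟩)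
        · refine ⟨hji, ?_⟩
          rw [h0]; simpa using (ha.1 i j hji.symm).1
        · refine ⟨(hij j hjf).symm, ?_⟩
          rw [hnf j hjf, sub_neg]
          have hne : (σ j) i ≠ (σ j) (π j) :=
            fun h => (hπji j hjf) ((σ j).injective h).symm
          have hlt' : (σ j) i < (σ j) (π j) := lt_of_le_of_ne hle hne
          exact ((hσ j).2 i (π j) (hij j hjf) hjf (fun h => (hπji j hjf) h.symm)).1 hlt'
    have hdisj : Disjoint (Finset.univ.filter fun k => π k = k ∧ k ≠ i ∧ γ k = 0)
        ((Finset.univ.filter fun j => π j ≠ j).filter fun j => (σ j) i ≤ (σ j) (π j)) := by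
      rw [Finset.disjoint_left]
      intro x hx hx'
      simp only [Finset.mem_filter] at hx hx'
      exact hx'.1.2 hx.2.1
    have hcard : ((Finset.univ.erase i).filter fun j => γ j - a i j < 0).card = (Finset.univ.filter fun k => π k = k ∧ k ≠ i ∧ γ k = 0).card + ((Finset.univ.filter fun j => π j ≠ j).filter fun j => (σ j) i ≤ (σ j) (π j)).card := by
      rw [hcount, Finset.card_union_of_disjoint hdisj]
    have hppos := prod_pos_iff_even' (Finset.univ.erase i) (fun j => γ j - a i j) hfac
    rw [hcard] at hppos
    have hpne : (∏ j ∈ Finset.univ.erase i, (γ j - a i j)) ≠ 0 :=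
      Finset.prod_ne_zero_iff.2 hfac
    unfold lamP
    have hv1 : v i ≤ 1 := hv i
    interval_cases h : v i
    · simp only [pow_zero, one_mul, zero_add]
      exact ⟨hpne, hppos⟩
    · simp only [pow_one, neg_one_mul]
      constructor
      · simpa using hpne
      · rw [neg_pos]
        constructor
        · intro hlt
          rw [add_comm, Nat.even_add_one]
          intro hE
          exact absurd (hppos.2 hE) (not_lt.2 hlt.le)
        · intro hE
          rw [add_comm, Nat.even_add_one] at hE
          have : ¬ 0 < ∏ j ∈ Finset.univ.erase i, (γ j - a i j) := fun h => hE (hppos.1 h)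
          exact lt_of_le_of_ne (not_lt.1 this) hpne
  constructor
  · rintro ⟨_, hle, hge⟩ i hi
    unfold IncMap
    rw [hsumcard i]
    rcases hfix i hi with h0 | h1
    · rw [if_neg (by rw [h0]; norm_num)]
      have hE : ¬ Even (v i + ((Finset.univ.filter fun k => π k = k ∧ k ≠ i ∧ γ k = 0).card + ((Finset.univ.filter fun j => π j ≠ j).filter fun j => (σ j) i ≤ (σ j) (π j)).card)) := by
        intro hE
        have := (hsign i hi).2.2 hE
        linarith [hle i h0]
      rw [Nat.not_even_iff] at hE
      omega
    · rw [if_pos h1]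
      have hpos : 0 < lamP v a i γ :=
        lt_of_le_of_ne (hge i h1) (Ne.symm (hsign i hi).1)
      have hE : Even (v i + ((Finset.univ.filter fun k => π k = k ∧ k ≠ i ∧ γ k = 0).card + ((Finset.univ.filter fun j => π j ≠ j).filter fun j => (σ j) i ≤ (σ j) (π j)).card)) := ((hsign i hi).2).1 hpos
      rw [Nat.even_iff] at hE
      omega
  · intro hInc
    refine ⟨⟨hcube, ?_⟩, ?_, ?_⟩
    · intro i hpos hlt
      by_cases hi : π i = i
      · rcases hfix i hi with h0 | h1
        · rw [h0] at hpos; exact absurd hpos (lt_irrefl 0)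
        · rw [h1] at hlt; exact absurd hlt (lt_irrefl 1)
      · exact hlam0 i hi
    · intro i h0
      by_cases hi : π i = i
      · have hI := hInc i hi
        unfold IncMap at hI
        rw [hsumcard i, if_neg (by rw [h0]; norm_num)] at hI
        have hE : ¬ Even (v i + ((Finset.univ.filter fun k => π k = k ∧ k ≠ i ∧ γ k = 0).card + ((Finset.univ.filter fun j => π j ≠ j).filter fun j => (σ j) i ≤ (σ j) (π j)).card)) := by
          rw [Nat.not_even_iff]; omega
        have : ¬ 0 < lamP v a i γ := fun h => hE ((hsign i hi).2.1 h)
        exact not_lt.1 this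
      · exact absurd h0 (by linarith [(hγ01 i hi).1])
    · intro i h1
      by_cases hi : π i = i
      · have hI := hInc i hi
        unfold IncMap at hI
        rw [hsumcard i, if_pos h1] at hI
        have hE : Even (v i + ((Finset.univ.filter fun k => π k = k ∧ k ≠ i ∧ γ k = 0).card + ((Finset.univ.filter fun j => π j ≠ j).filter fun j => (σ j) i ≤ (σ j) (π j)).card)) := by
          rw [Nat.even_iff]; omega
        exact ((hsign i hi).2.2 hE).le
      · exact absurd h1 (by linarith [(hγ01 i hi).2])
end

section
/- Let (v, a) be a product two-action game with m players and let π be a permutation of {1,…,m} with F(π) ≠ ∅. Then the number of elements of EC(π) that are Nash equilibria is either 0 or 2^{|F(π)|−1}. -/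
open Finset
open scoped Classical

/-! A point of `EC(π)` is determined by the set `Z ⊆ F(π)` of fixed players at `0`, and its
non-fixed coordinates make it an equilibrium candidate automatically. For a fixed player `i`, the
factor of `λ^i` over the other fixed players has sign `(-1)^{|Z ∖ {i}|}`, while the factor over the
non-fixed players, `offFixedFactor v a π i`, is a nonzero constant on `EC(π)`; so the Nash
condition at `i` reads `0 < (-1)^{|Z|} · offFixedFactor v a π i`. If these constants do not all
have the same sign there is no equilibrium; otherwise the equilibria are exactly the `Z` of one
parity, and each parity class holds half of the `2^{|F(π)|}` subsets. -/

theorem Finset.card_powerset_filter_even {α : Type*} {F : Finset α} (hF : F.Nonempty) :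
    #{Z ∈ F.powerset | Even #Z} = 2 ^ (#F - 1) := by
  have hsum : (#{Z ∈ F.powerset | Even #Z} : ℤ) - #{Z ∈ F.powerset | ¬Even #Z} = 0 := by
    rw [← sum_powerset_neg_one_pow_card_of_nonempty hF]
    simp_rw [neg_one_pow_eq_ite, sum_ite, sum_const, nsmul_eq_mul, mul_one, mul_neg_one,
      sub_eq_add_neg]
  have htotal := card_filter_add_card_filter_not (s := F.powerset) (fun Z => Even #Z)
  rw [card_powerset] at htotal
  have hpow : 2 ^ #F = 2 * 2 ^ (#F - 1) := by
    rw [← pow_succ', Nat.sub_add_cancel (card_pos.mpr hF)]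
  omega

theorem Finset.card_powerset_filter_odd {α : Type*} {F : Finset α} (hF : F.Nonempty) :
    #{Z ∈ F.powerset | Odd #Z} = 2 ^ (#F - 1) := by
  have htotal := card_filter_add_card_filter_not (s := F.powerset) (fun Z => Even #Z)
  rw [card_powerset, card_powerset_filter_even hF] at htotal
  simp_rw [Nat.not_even_iff_odd] at htotal
  have hpow : 2 ^ #F = 2 * 2 ^ (#F - 1) := by
    rw [← pow_succ', Nat.sub_add_cancel (card_pos.mpr hF)]
  omega

theorem Finset.ncard_subsets_forall_neg_one_pow_mul_pos {α : Type*} {F : Finset α}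
    (hF : F.Nonempty) (D : α → ℝ) :
    {Z | Z ⊆ F ∧ ∀ i ∈ F, 0 < (-1) ^ #Z * D i}.ncard = 0 ∨
      {Z | Z ⊆ F ∧ ∀ i ∈ F, 0 < (-1) ^ #Z * D i}.ncard = 2 ^ (#F - 1) := by
  have hfinite : {Z | Z ⊆ F ∧ ∀ i ∈ F, 0 < (-1) ^ #Z * D i} =
      ↑{Z ∈ F.powerset | ∀ i ∈ F, 0 < (-1) ^ #Z * D i} := by
    simp only [coe_filter, mem_powerset]
  rw [hfinite, Set.ncard_coe_finset]
  by_cases hsol : ∃ Z₀ ∈ F.powerset, ∀ i ∈ F, 0 < (-1) ^ #Z₀ * D i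
  · right
    obtain ⟨Z₀, -, hZ₀⟩ := hsol
    obtain ⟨i₀, hi₀⟩ := hF
    -- a solution fixes the sign of every `D i`, so the solutions form a parity class
    have hparity : ∀ Z : Finset α, (∀ i ∈ F, 0 < (-1) ^ #Z * D i) ↔ (Even #Z ↔ Even #Z₀) := by
      intro Z
      by_cases hZ : Even #Z <;> by_cases h₀ : Even #Z₀ <;>
        simp only [hZ, h₀, Even.neg_one_pow, (Nat.not_even_iff_odd.mp _).neg_one_pow, one_mul,
          neg_one_mul, iff_true, iff_false, not_true, not_false_iff] at hZ₀ ⊢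
      all_goals first | exact hZ₀ | exact fun h => by linarith [h i₀ hi₀, hZ₀ i₀ hi₀]
    rw [filter_congr fun Z _ => hparity Z]
    by_cases h₀ : Even #Z₀
    · simpa only [h₀, iff_true] using card_powerset_filter_even ⟨i₀, hi₀⟩
    · simpa only [h₀, iff_false, Nat.not_even_iff_odd] using card_powerset_filter_odd ⟨i₀, hi₀⟩
  · left
    simpa [card_eq_zero, filter_eq_empty_iff] using hsol

section ProductGame

variable {m : ℕ} (v : Fin m → ℕ) (a : Fin m → Fin m → ℝ) (π : Equiv.Perm (Fin m))

def fixedSet : Finset (Fin m) := {i | π i = i}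

def ecPoint (Z : Finset (Fin m)) : Fin m → ℝ :=
  fun j => if π j = j then (if j ∈ Z then 0 else 1) else a (π j) j

noncomputable def offFixedFactor (i : Fin m) : ℝ :=
  (-1) ^ v i * ∏ j ∈ (fixedSet π)ᶜ, (a (π j) j - a i j)

variable {a π}

lemma mem_fixedSet {i : Fin m} : i ∈ fixedSet π ↔ π i = i := by
  simp [fixedSet]

lemma fixedCard_eq_card_fixedSet : fixedCard π = #(fixedSet π) := rfl

lemma ecPoint_of_fixed {Z : Finset (Fin m)} {i : Fin m} (hi : π i = i) :
    ecPoint a π Z i = if i ∈ Z then 0 else 1 := if_pos hi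

lemma ecPoint_of_not_fixed (Z : Finset (Fin m)) {i : Fin m} (hi : π i ≠ i) :
    ecPoint a π Z i = a (π i) i := if_neg hi

lemma ecPoint_mem_ECset (ha : ∀ i j : Fin m, i ≠ j → 0 < a i j ∧ a i j < 1)
    (Z : Finset (Fin m)) : ecPoint a π Z ∈ ECset a π := by
  refine ⟨fun i => ?_, fun i hi => ?_, fun j hj => ecPoint_of_not_fixed Z hj⟩
  · by_cases hi : π i = i
    · rw [ecPoint_of_fixed hi]; split_ifs <;> norm_num
    · rw [ecPoint_of_not_fixed Z hi]; exact ⟨(ha _ _ hi).1.le, (ha _ _ hi).2.le⟩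
  · rw [ecPoint_of_fixed hi]; split_ifs <;> simp

lemma eq_ecPoint_of_mem_ECset {γ : Fin m → ℝ} (hγ : γ ∈ ECset a π) :
    γ = ecPoint a π {i ∈ fixedSet π | γ i = 0} := by
  funext i
  by_cases hi : π i = i
  · rw [ecPoint_of_fixed hi]
    rcases hγ.2.1 i hi with h | h <;> simp [h, mem_fixedSet, hi]
  · rw [ecPoint_of_not_fixed _ hi, hγ.2.2 i hi]

lemma mem_iff_ecPoint_eq_zero {Z : Finset (Fin m)} (hZ : Z ⊆ fixedSet π) {i : Fin m} :
    i ∈ Z ↔ π i = i ∧ ecPoint a π Z i = 0 := by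
  by_cases hi : π i = i
  · rw [ecPoint_of_fixed hi]; split_ifs <;> simp [*]
  · simp only [hi, false_and, iff_false]
    exact fun hiZ => hi (mem_fixedSet.mp (hZ hiZ))

lemma ecPoint_injOn : Set.InjOn (ecPoint a π) {Z | Z ⊆ fixedSet π} := by
  intro Z₁ hZ₁ Z₂ hZ₂ h
  ext i
  rw [mem_iff_ecPoint_eq_zero hZ₁, mem_iff_ecPoint_eq_zero hZ₂, h]

lemma ECset_eq_image (ha : ∀ i j : Fin m, i ≠ j → 0 < a i j ∧ a i j < 1) :
    ECset a π = ecPoint a π '' {Z | Z ⊆ fixedSet π} := by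
  ext γ
  constructor
  · exact fun hγ => ⟨_, filter_subset _ _, (eq_ecPoint_of_mem_ECset hγ).symm⟩
  · rintro ⟨Z, -, rfl⟩
    exact ecPoint_mem_ECset ha Z

lemma lamP_ecPoint_of_not_fixed (Z : Finset (Fin m)) {i : Fin m} (hi : π i ≠ i) :
    lamP v a i (ecPoint a π Z) = 0 := by
  set j := π.symm i
  have hπj : π j = i := π.apply_symm_apply i
  have hji : j ≠ i := fun h => hi (by rwa [h] at hπj)
  have hj : π j ≠ j := hπj ▸ hji.symm
  refine mul_eq_zero_of_right _ (prod_eq_zero (mem_erase.mpr ⟨hji, mem_univ j⟩) ?_)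
  rw [ecPoint_of_not_fixed Z hj, hπj, sub_self]

lemma offFixedFactor_ne_zero
    (ha : ∀ j i₁ i₂ : Fin m, i₁ ≠ j → i₂ ≠ j → i₁ ≠ i₂ → a i₁ j ≠ a i₂ j)
    {i : Fin m} (hi : π i = i) : offFixedFactor v a π i ≠ 0 := by
  refine mul_ne_zero (pow_ne_zero _ (by norm_num)) (prod_ne_zero_iff.mpr fun j hj => ?_)
  have hj : π j ≠ j := by simpa [mem_fixedSet] using hj
  have hij : i ≠ j := fun h => hj (h ▸ hi)
  have hπji : π j ≠ i := fun h => hij (π.injective (hi.trans h.symm))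
  exact sub_ne_zero.mpr (ha j (π j) i hj hij hπji)

lemma lamP_ecPoint_of_fixed (ha : ∀ i j : Fin m, i ≠ j → 0 < a i j ∧ a i j < 1)
    {Z : Finset (Fin m)} (hZ : Z ⊆ fixedSet π) {i : Fin m} (hi : π i = i) :
    ∃ T, 0 < T ∧
      lamP v a i (ecPoint a π Z) = T * ((-1) ^ #(Z.erase i) * offFixedFactor v a π i) := by
  set F := fixedSet π
  have hsplit : ∏ j ∈ univ.erase i, (ecPoint a π Z j - a i j) =
      (∏ j ∈ F.erase i, (ecPoint a π Z j - a i j)) * ∏ j ∈ Fᶜ, (ecPoint a π Z j - a i j) := by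
    rw [← prod_filter_mul_prod_filter_not (univ.erase i) (· ∈ F)]
    have hiF : i ∈ F := mem_fixedSet.mpr hi
    congr 2 <;> ext j <;> simp only [mem_filter, mem_erase, mem_univ, mem_compl] <;> grind
  have hfixed : ∀ j ∈ F.erase i, ecPoint a π Z j - a i j =
      (if j ∈ Z then -1 else 1) * (if j ∈ Z then a i j else 1 - a i j) := by
    intro j hj
    rw [ecPoint_of_fixed (mem_fixedSet.mp (mem_of_mem_erase hj))]
    split_ifs <;> ring
  have hsign : ∏ j ∈ F.erase i, (if j ∈ Z then (-1 : ℝ) else 1) = (-1) ^ #(Z.erase i) := by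
    rw [prod_ite_mem, erase_inter, inter_eq_right.mpr hZ, prod_const]
  have hother : ∀ j ∈ Fᶜ, ecPoint a π Z j - a i j = a (π j) j - a i j := fun j hj =>
    by rw [ecPoint_of_not_fixed Z (by simpa [F, mem_fixedSet] using hj)]
  refine ⟨∏ j ∈ F.erase i, (if j ∈ Z then a i j else 1 - a i j), prod_pos fun j hj => ?_, ?_⟩
  · have := ha i j (ne_of_mem_erase hj).symm
    split_ifs <;> linarith
  · rw [lamP, offFixedFactor, hsplit, prod_congr rfl hfixed, prod_congr rfl hother,
      prod_mul_distrib, hsign]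
    ring

lemma ecPoint_boundary_conditions_iff (ha : GoodCoef a) {Z : Finset (Fin m)}
    (hZ : Z ⊆ fixedSet π) {i : Fin m} (hi : π i = i) :
    ((ecPoint a π Z i = 0 → lamP v a i (ecPoint a π Z) ≤ 0) ∧
        (ecPoint a π Z i = 1 → 0 ≤ lamP v a i (ecPoint a π Z))) ↔
      0 < (-1) ^ #Z * offFixedFactor v a π i := by
  obtain ⟨T, hT, hlam⟩ := lamP_ecPoint_of_fixed v ha.1 hZ hi
  set c := (-1) ^ #(Z.erase i) * offFixedFactor v a π i
  have hc : c ≠ 0 := mul_ne_zero (pow_ne_zero _ (by norm_num)) (offFixedFactor_ne_zero v ha.2 hi)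
  rw [hlam, ecPoint_of_fixed hi]
  by_cases hiZ : i ∈ Z
  · have hsign : (-1) ^ #Z * offFixedFactor v a π i = -c := by
      rw [← card_erase_add_one hiZ, pow_succ]; ring
    simp only [hiZ, if_true, zero_ne_one, false_imp_iff, and_true, forall_const, hsign,
      ← neg_nonneg (a := T * c), ← mul_neg, mul_nonneg_iff_of_pos_left hT]
    exact (neg_ne_zero.mpr hc).symm.le_iff_lt
  · have hsign : (-1) ^ #Z * offFixedFactor v a π i = c := by
      simp only [c, erase_eq_of_notMem hiZ]
    simp only [hiZ, if_false, one_ne_zero, false_imp_iff, true_and, forall_const, hsign,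
      mul_nonneg_iff_of_pos_left hT]
    exact hc.symm.le_iff_lt

lemma isEqCand_ecPoint (ha : ∀ i j : Fin m, i ≠ j → 0 < a i j ∧ a i j < 1)
    (Z : Finset (Fin m)) : IsEqCand v a (ecPoint a π Z) := by
  refine ⟨(ecPoint_mem_ECset ha Z).1, fun i h₀ h₁ => ?_⟩
  by_cases hi : π i = i
  · rw [ecPoint_of_fixed hi] at h₀ h₁
    split_ifs at h₀ h₁ <;> linarith
  · exact lamP_ecPoint_of_not_fixed v Z hi

lemma isNashP_ecPoint_iff (ha : GoodCoef a) {Z : Finset (Fin m)} (hZ : Z ⊆ fixedSet π) :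
    IsNashP v a (ecPoint a π Z) ↔ ∀ i ∈ fixedSet π, 0 < (-1) ^ #Z * offFixedFactor v a π i := by
  simp only [IsNashP, isEqCand_ecPoint v ha.1 Z, true_and, ← forall_and]
  refine forall_congr' fun i => ?_
  by_cases hi : π i = i
  · simp only [mem_fixedSet, hi, forall_const, ecPoint_boundary_conditions_iff v ha hZ hi]
  · have hbounds := ha.1 _ _ hi
    rw [ecPoint_of_not_fixed Z hi]
    simp only [mem_fixedSet, hi, hbounds.1.ne', hbounds.2.ne, false_imp_iff, and_self]

lemma ncard_nash_inter_ECset (ha : GoodCoef a) :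
    {γ ∈ ECset a π | IsNashP v a γ}.ncard =
      {Z | Z ⊆ fixedSet π ∧ ∀ i ∈ fixedSet π, 0 < (-1) ^ #Z * offFixedFactor v a π i}.ncard := by
  have hset : {γ ∈ ECset a π | IsNashP v a γ} = ecPoint a π ''
      {Z | Z ⊆ fixedSet π ∧ ∀ i ∈ fixedSet π, 0 < (-1) ^ #Z * offFixedFactor v a π i} := by
    rw [ECset_eq_image ha.1]
    ext γ
    constructor
    · rintro ⟨⟨Z, hZ, rfl⟩, hnash⟩
      exact ⟨Z, ⟨hZ, (isNashP_ecPoint_iff v ha hZ).mp hnash⟩, rfl⟩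
    · rintro ⟨Z, ⟨hZ, hsign⟩, rfl⟩
      exact ⟨⟨Z, hZ, rfl⟩, (isNashP_ecPoint_iff v ha hZ).mpr hsign⟩
  rw [hset, (ecPoint_injOn.mono fun _ hZ => hZ.1).ncard_image]

end ProductGame

theorem stmt7_general {m : ℕ} (v : Fin m → ℕ)
    (a : Fin m → Fin m → ℝ) (ha : GoodCoef a)
    (π : Equiv.Perm (Fin m)) (hF : ∃ i, π i = i) :
    {γ ∈ ECset a π | IsNashP v a γ}.ncard = 0 ∨
    {γ ∈ ECset a π | IsNashP v a γ}.ncard = 2 ^ (fixedCard π - 1) := by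
  obtain ⟨i, hi⟩ := hF
  rw [ncard_nash_inter_ECset v ha, fixedCard_eq_card_fixedSet]
  exact ncard_subsets_forall_neg_one_pow_mul_pos ⟨i, mem_fixedSet.mpr hi⟩ _

/-- For `π` with `F(π) ≠ ∅`, the number of Nash equilibria in `EC(π)`
is either `0` or `2^{|F(π)|−1}`. -/
theorem stmt7 {m : ℕ} (hm : 1 ≤ m) (v : Fin m → ℕ) (hv : ∀ i, v i ≤ 1)
    (a : Fin m → Fin m → ℝ) (ha : GoodCoef a)
    (π : Equiv.Perm (Fin m)) (hF : ∃ i, π i = i) :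
    {γ ∈ ECset a π | IsNashP v a γ}.ncard = 0 ∨
    {γ ∈ ECset a π | IsNashP v a γ}.ncard = 2 ^ (fixedCard π - 1) :=
  stmt7_general v a ha π hF
end

section
/- Let (v, a) be a product two-action game with m players and let π be a permutation of {1,…,m} with exactly one fixed point, |F(π)| = 1. Then EC(π) has exactly two elements, and exactly one of them is a Nash equilibrium. -/
open Finset
open scoped Classical

/-- For `π` with `|F(π)| = 1`, `EC(π)` has exactly two elements and exactly
one of them is a Nash equilibrium. -/
theorem stmt8 {m : ℕ} (hm : 1 ≤ m) (v : Fin m → ℕ) (hv : ∀ i, v i ≤ 1)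
    (a : Fin m → Fin m → ℝ) (ha : GoodCoef a)
    (π : Equiv.Perm (Fin m)) (hF : fixedCard π = 1) :
    (ECset a π).ncard = 2 ∧ {γ ∈ ECset a π | IsNashP v a γ}.ncard = 1 := by
  classical
  obtain ⟨i₀, hi₀⟩ := Finset.card_eq_one.mp hF
  have hfix : ∀ j, π j = j ↔ j = i₀ := by
    intro j
    constructor
    · intro h
      have hmem : j ∈ Finset.univ.filter fun i => π i = i := by simp [h]
      rw [hi₀] at hmem; simpa using hmem
    · intro h
      rw [h]
      have hmem2 : i₀ ∈ Finset.univ.filter fun i => π i = i := by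
        rw [hi₀]; exact Finset.mem_singleton_self _
      simpa using hmem2
  have hπi₀ : π i₀ = i₀ := (hfix i₀).mpr rfl
  set γb : ℝ → Fin m → ℝ := fun b j => if π j = j then b else a (π j) j with hγb
  have hne_i₀ : ∀ j, j ≠ i₀ → π j ≠ j := fun j hj h => hj ((hfix j).mp h)
  have hπne : ∀ j, j ≠ i₀ → π j ≠ i₀ := by
    intro j hj h
    exact hj (π.injective (h.trans hπi₀.symm))
  set L := lamP v a i₀ (γb 0) with hL
  have hlamconst : ∀ b, lamP v a i₀ (γb b) = L := by
    intro b
    rw [hL]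
    unfold lamP
    congr 1
    apply Finset.prod_congr rfl
    intro j hj
    have hj' : j ≠ i₀ := (Finset.mem_erase.mp hj).1
    simp [hγb, hne_i₀ j hj']
  have hLne : L ≠ 0 := by
    rw [hL]
    unfold lamP
    apply mul_ne_zero (pow_ne_zero _ (by norm_num))
    rw [Finset.prod_ne_zero_iff]
    intro j hj
    have hj' : j ≠ i₀ := (Finset.mem_erase.mp hj).1
    have h1 : γb 0 j = a (π j) j := by simp [hγb, hne_i₀ j hj']
    rw [h1]
    exact sub_ne_zero.mpr (ha.2 j (π j) i₀ (hne_i₀ j hj') hj'.symm (hπne j hj'))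
  have hlamzero : ∀ (b : ℝ) j, π j ≠ j → lamP v a j (γb b) = 0 := by
    intro b j hj
    unfold lamP
    apply mul_eq_zero_of_right
    have hkj : π.symm j ≠ j := by
      intro h
      exact hj ((congrArg π h).symm.trans (π.apply_symm_apply j))
    apply Finset.prod_eq_zero (i := π.symm j)
    · exact Finset.mem_erase.mpr ⟨hkj, Finset.mem_univ _⟩
    · have hk : π (π.symm j) = j := π.apply_symm_apply j
      have hkne : π (π.symm j) ≠ π.symm j := by
        rw [hk]; exact fun h => hkj h.symm
      simp only [hγb, if_neg hkne, hk, sub_self]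
  have hcube : ∀ b : ℝ, 0 ≤ b → b ≤ 1 → InCube (γb b) := by
    intro b hb0 hb1 j
    by_cases hj : π j = j
    · simp [hγb, hj, hb0, hb1]
    · have := ha.1 (π j) j hj
      simp only [hγb, if_neg hj]
      exact ⟨this.1.le, this.2.le⟩
  have hECmem : ∀ γ, γ ∈ ECset a π ↔ γ = γb 0 ∨ γ = γb 1 := by
    intro γ
    constructor
    · rintro ⟨hcube', h01, hrest⟩
      rcases h01 i₀ hπi₀ with h | h
      · left; funext j
        by_cases hj : π j = j
        · have hji : j = i₀ := (hfix j).mp hj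
          subst hji; simp [hγb, hj, h]
        · simp [hγb, hj, hrest j hj]
      · right; funext j
        by_cases hj : π j = j
        · have hji : j = i₀ := (hfix j).mp hj
          subst hji; simp [hγb, hj, h]
        · simp [hγb, hj, hrest j hj]
    · have hmem : ∀ b : ℝ, 0 ≤ b → b ≤ 1 → (b = 0 ∨ b = 1) → γb b ∈ ECset a π := by
        intro b hb0 hb1 hb01
        refine ⟨hcube b hb0 hb1, ?_, ?_⟩
        · intro i hi
          simp only [hγb, if_pos hi]
          exact hb01
        · intro j hj
          simp [hγb, hj]
      rintro (rfl | rfl)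
      · exact hmem 0 le_rfl zero_le_one (Or.inl rfl)
      · exact hmem 1 zero_le_one le_rfl (Or.inr rfl)
  have hcand : ∀ b : ℝ, 0 ≤ b → b ≤ 1 → (b = 0 ∨ b = 1) → IsEqCand v a (γb b) := by
    intro b hb0 hb1 hb01
    refine ⟨hcube b hb0 hb1, ?_⟩
    intro i h0 h1
    by_cases hi : π i = i
    · exfalso
      simp only [hγb, if_pos hi] at h0 h1
      rcases hb01 with rfl | rfl <;> linarith
    · exact hlamzero b i hi
  have hN0 : IsNashP v a (γb 0) ↔ L ≤ 0 := by
    constructor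
    · intro h
      have h0 : γb 0 i₀ = 0 := by simp [hγb, hπi₀]
      have := h.2.1 i₀ h0
      rwa [hlamconst 0] at this
    · intro hLle
      refine ⟨hcand 0 le_rfl zero_le_one (Or.inl rfl), ?_, ?_⟩
      · intro i hi
        by_cases hfi : π i = i
        · have hii : i = i₀ := (hfix i).mp hfi
          subst hii
          rw [hlamconst 0]; exact hLle
        · exfalso
          simp only [hγb, if_neg hfi] at hi
          exact absurd hi (ne_of_gt (ha.1 (π i) i hfi).1)
      · intro i hi
        exfalso
        by_cases hfi : π i = i
        · simp [hγb, hfi] at hi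
        · simp only [hγb, if_neg hfi] at hi
          exact absurd hi (ne_of_lt (ha.1 (π i) i hfi).2)
  have hN1 : IsNashP v a (γb 1) ↔ 0 ≤ L := by
    constructor
    · intro h
      have h1 : γb 1 i₀ = 1 := by simp [hγb, hπi₀]
      have := h.2.2 i₀ h1
      rwa [hlamconst 1] at this
    · intro hLle
      refine ⟨hcand 1 zero_le_one le_rfl (Or.inr rfl), ?_, ?_⟩
      · intro i hi
        exfalso
        by_cases hfi : π i = i
        · simp [hγb, hfi] at hi
        · simp only [hγb, if_neg hfi] at hi
          exact absurd hi (ne_of_gt (ha.1 (π i) i hfi).1)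
      · intro i hi
        by_cases hfi : π i = i
        · have hii : i = i₀ := (hfix i).mp hfi
          subst hii
          rw [hlamconst 1]; exact hLle
        · exfalso
          simp only [hγb, if_neg hfi] at hi
          exact absurd hi (ne_of_lt (ha.1 (π i) i hfi).2)
  have hne01 : γb 0 ≠ γb 1 := by
    intro h
    have := congrFun h i₀
    simp [hγb, hπi₀] at this
  have hEC : ECset a π = {γb 0, γb 1} := by
    ext γ
    rw [hECmem γ]
    simp [Set.mem_insert_iff]
  constructor
  · rw [hEC]; exact Set.ncard_pair hne01
  · rcases hLne.lt_or_gt with hLlt | hLgt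
    · have hset : {γ ∈ ECset a π | IsNashP v a γ} = {γb 0} := by
        ext γ
        simp only [Set.mem_setOf_eq, Set.mem_singleton_iff, hECmem γ]
        constructor
        · rintro ⟨rfl | rfl, hn⟩
          · rfl
          · exact absurd (hN1.mp hn) (not_le.mpr hLlt)
        · rintro rfl
          exact ⟨Or.inl rfl, hN0.mpr hLlt.le⟩
      rw [hset]; exact Set.ncard_singleton _
    · have hset : {γ ∈ ECset a π | IsNashP v a γ} = {γb 1} := by
        ext γ
        simp only [Set.mem_setOf_eq, Set.mem_singleton_iff, hECmem γ]
        constructor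
        · rintro ⟨rfl | rfl, hn⟩
          · exact absurd (hN0.mp hn) (not_le.mpr hLgt)
          · rfl
        · rintro rfl
          exact ⟨Or.inr rfl, hN1.mpr hLgt.le⟩
      rw [hset]; exact Set.ncard_singleton _
end

section
/- Let (v, a) be a product two-action game with m players. If v = (0,…,0) or v = (1,…,1), then exactly 2^{m−1} of the 2^m points of {0,1}^m are Nash equilibria; if v is not constant, then no point of {0,1}^m is a Nash equilibrium. -/
open Finset
open scoped Classical

section Stmt9Aux

variable {m : ℕ}

private lemma pow_mul_nonneg_iff {Q : ℝ} (hQ : 0 < Q) (e : ℕ) :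
    0 ≤ (-1:ℝ)^e * Q ↔ Even e := by
  constructor
  · intro h
    by_contra he
    rw [(Nat.not_even_iff_odd.mp he).neg_one_pow] at h
    linarith
  · intro he
    rw [he.neg_one_pow]
    linarith

private lemma pow_mul_nonpos_iff {Q : ℝ} (hQ : 0 < Q) (e : ℕ) :
    (-1:ℝ)^e * Q ≤ 0 ↔ ¬ Even e := by
  constructor
  · intro h he
    rw [he.neg_one_pow] at h
    linarith
  · intro he
    rw [(Nat.not_even_iff_odd.mp he).neg_one_pow]
    linarith

private lemma lam_decomp (v : Fin m → ℕ) (a : Fin m → Fin m → ℝ) (ha : GoodCoef a)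
    (γ : Fin m → ℝ) (hγ : ∀ j, γ j = 0 ∨ γ j = 1) (i : Fin m) :
    ∃ Q : ℝ, 0 < Q ∧
      lamP v a i γ =
        (-1 : ℝ) ^ (v i + ((Finset.univ.erase i).filter fun j => γ j = 0).card) * Q := by
  refine ⟨∏ j ∈ Finset.univ.erase i, (if γ j = 0 then a i j else 1 - a i j), ?_, ?_⟩
  · refine Finset.prod_pos fun j hj => ?_
    have hij : i ≠ j := (Finset.ne_of_mem_erase hj).symm
    obtain ⟨h1, h2⟩ := ha.1 i j hij
    split <;> linarith
  · unfold lamP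
    have h1 : ∀ j ∈ Finset.univ.erase i,
        γ j - a i j = (if γ j = 0 then (-1:ℝ) else 1) *
          (if γ j = 0 then a i j else 1 - a i j) := by
      intro j _
      rcases hγ j with h | h
      · rw [if_pos h, if_pos h, h]; ring
      · rw [if_neg (by rw [h]; norm_num), if_neg (by rw [h]; norm_num), h]; ring
    rw [Finset.prod_congr rfl h1, Finset.prod_mul_distrib, Finset.prod_ite,
      Finset.prod_const, Finset.prod_const, one_pow, mul_one, pow_add]
    ring

private lemma nash_vertex_iff (v : Fin m → ℕ) (a : Fin m → Fin m → ℝ) (ha : GoodCoef a)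
    (γ : Fin m → ℝ) (hγ : ∀ j, γ j = 0 ∨ γ j = 1) :
    IsNashP v a γ ↔
      ∀ i, Even (v i + (Finset.univ.filter fun j => γ j = 0).card) := by
  classical
  set Z := (Finset.univ.filter fun j => γ j = 0).card with hZdef
  have hcube : InCube γ := fun i => by rcases hγ i with h | h <;> rw [h] <;> norm_num
  have hfe : ∀ i : Fin m, ((Finset.univ.erase i).filter fun j => γ j = 0)
      = ((Finset.univ.filter fun j => γ j = 0).erase i) := by
    intro i
    ext j
    simp only [Finset.mem_filter, Finset.mem_erase, Finset.mem_univ, true_and, and_true]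
  have hZ0 : ∀ i : Fin m, γ i = 0 →
      Z = ((Finset.univ.erase i).filter fun j => γ j = 0).card + 1 := by
    intro i hi
    rw [hfe i, Finset.card_erase_of_mem (by simp [hi])]
    have hpos : 0 < Z := Finset.card_pos.mpr ⟨i, by simp [hi]⟩
    omega
  have hZ1 : ∀ i : Fin m, γ i = 1 →
      ((Finset.univ.erase i).filter fun j => γ j = 0).card = Z := by
    intro i hi
    rw [hfe i, Finset.erase_eq_of_notMem (by simp [hi])]
  constructor
  · rintro ⟨_, hle, hge⟩ i
    obtain ⟨Q, hQ, hlam⟩ := lam_decomp v a ha γ hγ i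
    rcases hγ i with h | h
    · have := hle i h
      rw [hlam] at this
      have hodd := (pow_mul_nonpos_iff hQ _).mp this
      have hZeq := hZ0 i h
      rw [hZeq]
      simp only [Nat.even_iff] at hodd ⊢
      omega
    · have := hge i h
      rw [hlam] at this
      have heven := (pow_mul_nonneg_iff hQ _).mp this
      rwa [hZ1 i h] at heven
  · intro hpar
    refine ⟨⟨hcube, fun i h0 h1 => ?_⟩, fun i hi => ?_, fun i hi => ?_⟩
    · rcases hγ i with h | h <;> rw [h] at h0 h1 <;> linarith
    · obtain ⟨Q, hQ, hlam⟩ := lam_decomp v a ha γ hγ i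
      rw [hlam]
      apply (pow_mul_nonpos_iff hQ _).mpr
      have hZeq := hZ0 i hi
      have := hpar i
      rw [hZeq] at this
      simp only [Nat.even_iff] at this ⊢
      omega
    · obtain ⟨Q, hQ, hlam⟩ := lam_decomp v a ha γ hγ i
      rw [hlam]
      apply (pow_mul_nonneg_iff hQ _).mpr
      rw [hZ1 i hi]
      exact hpar i

private def iotaB (b : Fin m → Bool) : Fin m → ℝ := fun j => if b j then 1 else 0

private lemma iotaB_inj : Function.Injective (iotaB (m := m)) := by
  intro b b' h
  funext j
  have hj := congrFun h j
  unfold iotaB at hj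
  cases hb : b j <;> cases hb' : b' j <;> rw [hb, hb'] at hj <;> simp_all <;> norm_num at hj

private def cntB (b : Fin m → Bool) : ℕ := (Finset.univ.filter fun j => b j = false).card

private lemma card_even_filter (hm : 1 ≤ m) (c : ℕ) :
    (Finset.univ.filter fun b : Fin m → Bool => Even (c + cntB b)).card = 2 ^ (m - 1) := by
  classical
  set i0 : Fin m := ⟨0, hm⟩
  set e : (Fin m → Bool) → (Fin m → Bool) := fun b => Function.update b i0 (!(b i0)) with he
  have hsplit : ∀ b' : Fin m → Bool, cntB b' =
      (if b' i0 = false then 1 else 0)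
        + ((Finset.univ.erase i0).filter fun j => b' j = false).card := by
    intro b'
    unfold cntB
    conv_lhs => rw [← Finset.insert_erase (Finset.mem_univ i0)]
    rw [Finset.filter_insert]
    split
    · rw [Finset.card_insert_of_notMem (by simp)]
      omega
    · simp
  have hflip : ∀ b, cntB (e b) + cntB b
      = 2 * ((Finset.univ.erase i0).filter fun j => b j = false).card + 1 := by
    intro b
    have hrest : ((Finset.univ.erase i0).filter fun j => e b j = false)
        = ((Finset.univ.erase i0).filter fun j => b j = false) := by
      apply Finset.filter_congr
      intro j hj
      have hji : j ≠ i0 := Finset.ne_of_mem_erase hj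
      simp [he, Function.update_of_ne hji]
    rw [hsplit (e b), hsplit b, hrest]
    have hei0 : e b i0 = !(b i0) := by simp [he]
    rw [hei0]
    cases b i0 <;> simp <;> omega
  have hmem : ∀ b, Even (c + cntB b) ↔ ¬ Even (c + cntB (e b)) := by
    intro b
    have := hflip b
    simp only [Nat.even_iff] at *
    omega
  have hee : ∀ b, e (e b) = b := by
    intro b
    funext j
    by_cases hj : j = i0
    · subst hj
      simp [he]
    · simp [he, Function.update_of_ne hj]
  have hcard : (Finset.univ.filter fun b : Fin m → Bool => Even (c + cntB b)).card
      = (Finset.univ.filter fun b : Fin m → Bool => ¬ Even (c + cntB b)).card := by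
    apply Finset.card_bij' (fun b _ => e b) (fun b _ => e b)
    · intro b hb
      simp only [Finset.mem_filter, Finset.mem_univ, true_and] at hb ⊢
      exact (hmem b).mp hb
    · intro b hb
      simp only [Finset.mem_filter, Finset.mem_univ, true_and] at hb ⊢
      have := hmem (e b)
      rw [hee b] at this
      exact this.mpr hb
    · intro b _; exact hee b
    · intro b _; exact hee b
  have htot : (Finset.univ.filter fun b : Fin m → Bool => Even (c + cntB b)).card
      + (Finset.univ.filter fun b : Fin m → Bool => ¬ Even (c + cntB b)).card
      = 2 ^ m := by
    rw [Finset.card_filter_add_card_filter_not, Finset.card_univ]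
    simp
  have hpow : 2 ^ m = 2 * 2 ^ (m - 1) := by
    conv_lhs => rw [show m = (m - 1) + 1 by omega]
    rw [pow_succ]
    ring
  omega

end Stmt9Aux

/-- If `v` is constant (all `0` or all `1`) then exactly `2^{m−1}` of the
`2^m` vertices of the cube are Nash equilibria; if `v` is not constant then no vertex is
a Nash equilibrium. -/
theorem stmt9 {m : ℕ} (hm : 1 ≤ m) (v : Fin m → ℕ) (hv : ∀ i, v i ≤ 1)
    (a : Fin m → Fin m → ℝ) (ha : GoodCoef a) :
    (((∀ i, v i = 0) ∨ (∀ i, v i = 1)) →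
      {γ : Fin m → ℝ | (∀ i, γ i = 0 ∨ γ i = 1) ∧ IsNashP v a γ}.ncard = 2 ^ (m - 1)) ∧
    ((¬ (∀ i, v i = 0)) → (¬ (∀ i, v i = 1)) →
      ∀ γ : Fin m → ℝ, (∀ i, γ i = 0 ∨ γ i = 1) → ¬ IsNashP v a γ) := by
  constructor
  · intro hconst
    obtain ⟨c, hvc⟩ : ∃ c : ℕ, ∀ i, v i = c := by
      rcases hconst with h | h
      exacts [⟨0, h⟩, ⟨1, h⟩]
    have hset : {γ : Fin m → ℝ | (∀ i, γ i = 0 ∨ γ i = 1) ∧ IsNashP v a γ}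
        = iotaB '' {b | Even (c + cntB b)} := by
      ext γ
      constructor
      · rintro ⟨hγ, hN⟩
        refine ⟨fun j => if γ j = 1 then true else false, ?_, ?_⟩
        · have hpar := (nash_vertex_iff v a ha γ hγ).mp hN ⟨0, hm⟩
          rw [hvc] at hpar
          have hcnt : cntB (fun j => if γ j = 1 then true else false)
              = (Finset.univ.filter fun j => γ j = 0).card := by
            unfold cntB
            exact congrArg Finset.card (Finset.filter_congr fun j _ => by
              rcases hγ j with h | h <;> simp [h])
          show Even (c + cntB _)
          rw [hcnt]
          exact hpar
        · funext j
          rcases hγ j with h | h <;> simp [iotaB, h]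
      · rintro ⟨b, hb, rfl⟩
        have hγ : ∀ j, iotaB b j = 0 ∨ iotaB b j = 1 := fun j => by
          unfold iotaB; cases b j <;> simp
        refine ⟨hγ, (nash_vertex_iff v a ha _ hγ).mpr fun i => ?_⟩
        rw [hvc i]
        have hcnt : (Finset.univ.filter fun j => iotaB b j = 0).card = cntB b := by
          unfold cntB
          exact congrArg Finset.card (Finset.filter_congr fun j _ => by
            cases hbj : b j <;> simp [iotaB, hbj])
        rw [hcnt]
        exact hb
    rw [hset, Set.ncard_image_of_injective _ iotaB_inj]
    have hBset : {b : Fin m → Bool | Even (c + cntB b)}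
        = ↑(Finset.univ.filter fun b : Fin m → Bool => Even (c + cntB b)) := by
      ext b; simp
    rw [hBset, Set.ncard_coe_finset, card_even_filter hm c]
  · intro h0 h1 γ hγ hN
    push_neg at h0 h1
    obtain ⟨i0, hi0⟩ := h0
    obtain ⟨i1, hi1⟩ := h1
    have hp := (nash_vertex_iff v a ha γ hγ).mp hN
    have p0 := hp i0
    have p1 := hp i1
    have e0 : v i0 = 1 := by have := hv i0; omega
    have e1 : v i1 = 0 := by have := hv i1; omega
    rw [e0] at p0
    rw [e1] at p1
    simp only [Nat.even_iff] at p0 p1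
    omega
end

section
/- Let (v, a) be a product two-action game with m players such that v = (0,…,0) and for every j ∈ {1,…,m} and all distinct i₁, i₂ ∈ {1,…,m} ∖ {j}: a^{i₁}_j > a^{i₂}_j if and only if δ^j(i₁) < δ^j(i₂) (i.e., the j-th associated permutation σ^j equals δ^j). Then for every permutation π of {1,…,m} with |F(π)| ≥ 2 and all i₁, i₂ ∈ F(π): Inc(g(π), i₁) = Inc(g(π), i₂). -/
open Finset
open scoped Classical

/-- Circular distance `(x - j) mod m` on `Fin m`. -/
def dd (m : ℕ) (j x : Fin m) : ℕ := (x.1 + (m - j.1)) % m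

lemma dd_spec {m : ℕ} (j x : Fin m) (h : j ≠ x) :
    1 ≤ dd m j x ∧ dd m j x < m ∧ (dd m j x + j.1 = x.1 ∨ dd m j x + j.1 = x.1 + m) := by
  have hj := j.isLt; have hx := x.isLt
  have hne : j.1 ≠ x.1 := fun e => h (Fin.ext e)
  unfold dd
  rcases Nat.lt_or_ge j.1 x.1 with hlt | hge
  · have e : x.1 + (m - j.1) = (x.1 - j.1) + m := by omega
    rw [e, Nat.add_mod_right, Nat.mod_eq_of_lt (by omega)]
    omega
  · rw [Nat.mod_eq_of_lt (by omega)]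
    omega

lemma dd_add {m : ℕ} (j x : Fin m) (h : j ≠ x) : dd m j x + dd m x j = m := by
  obtain ⟨a1, a2, a3⟩ := dd_spec j x h
  obtain ⟨b1, b2, b3⟩ := dd_spec x j (Ne.symm h)
  omega

lemma delta_eq {m : ℕ} (j x : Fin m) (h : j ≠ x) :
    deltaFun m (j.1 + 1) (x.1 + 1) = dd m j x + chiN (dd m j x) (j.1 + 1) := by
  obtain ⟨a1, a2, a3⟩ := dd_spec j x h
  have hj := j.isLt; have hx := x.isLt
  have hne : j.1 ≠ x.1 := fun e => h (Fin.ext e)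
  unfold deltaFun chiN
  split_ifs <;> omega

lemma delta_lt_iff {m : ℕ} (j x₁ x₂ : Fin m) (h1 : j ≠ x₁) (h2 : j ≠ x₂) :
    deltaFun m (j.1 + 1) (x₁.1 + 1) < deltaFun m (j.1 + 1) (x₂.1 + 1) ↔
      dd m j x₁ < dd m j x₂ := by
  rw [delta_eq j x₁ h1, delta_eq j x₂ h2]
  unfold chiN
  split_ifs <;> omega

/-- If `v = (0,…,0)` and the associated permutations `σ^j` equal `δ^j`
(i.e. `a^{i₁}_j > a^{i₂}_j ↔ δ^j(i₁) < δ^j(i₂)` for distinct `i₁, i₂ ≠ j`), then for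
every `π` with `|F(π)| ≥ 2` and all `i₁, i₂ ∈ F(π)`: `Inc(g(π), i₁) = Inc(g(π), i₂)`.
(Player `k : Fin m` corresponds to the number `k+1 ∈ {1,…,m}`.) -/
theorem stmt12 {m : ℕ} (hm : 1 ≤ m) (v : Fin m → ℕ) (hv0 : ∀ i, v i = 0)
    (a : Fin m → Fin m → ℝ) (ha : GoodCoef a)
    (hδ : ∀ j i₁ i₂ : Fin m, i₁ ≠ j → i₂ ≠ j → i₁ ≠ i₂ →
      (a i₂ j < a i₁ j ↔
        deltaFun m (j.1 + 1) (i₁.1 + 1) < deltaFun m (j.1 + 1) (i₂.1 + 1)))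
    (σ : Fin m → Equiv.Perm (Fin m)) (hσ : ∀ j, IsAssoc a j (σ j))
    (π : Equiv.Perm (Fin m)) (hF : 2 ≤ fixedCard π)
    (i₁ i₂ : Fin m) (h1 : π i₁ = i₁) (h2 : π i₂ = i₂) :
    IncMap v σ π (gP a π) i₁ = IncMap v σ π (gP a π) i₂ := by
  classical
  set nf : Finset (Fin m) := Finset.univ.filter (fun j => π j ≠ j) with hnf
  -- the key identity: m * S i = ∑ dd m j (π j) for every fixed point i
  have key : ∀ i : Fin m, π i = i →
      m * (∑ j ∈ nf, (if (σ j) i ≤ (σ j) (π j) then 1 else 0)) =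
        ∑ j ∈ nf, dd m j (π j) := by
    intro i hi
    have hterm : ∀ j ∈ nf,
        dd m j i + dd m i (π j) + m * (if (σ j) i ≤ (σ j) (π j) then 1 else 0)
          = dd m j (π j) + m := by
      intro j hj
      have hjne : π j ≠ j := by
        simpa [hnf, Finset.mem_filter] using hj
      have hij : i ≠ j := fun e => hjne (e ▸ hi)
      have hipj : i ≠ π j := by
        intro e
        exact hij (π.injective (hi.trans e))
      have hiff : ((σ j) i ≤ (σ j) (π j)) ↔ dd m j i < dd m j (π j) := by
        have hne' : (σ j) i ≠ (σ j) (π j) := fun e => hipj ((σ j).injective e)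
        have h1 : (σ j) i < (σ j) (π j) ↔ a (π j) j < a i j :=
          (hσ j).2 i (π j) hij hjne hipj
        have h2 := hδ j i (π j) hij hjne hipj
        have h3 := delta_lt_iff j i (π j) (Ne.symm hij) (Ne.symm hjne)
        constructor
        · intro h
          exact h3.mp (h2.mp (h1.mp (lt_of_le_of_ne h hne')))
        · intro h
          exact le_of_lt (h1.mpr (h2.mpr (h3.mpr h)))
      obtain ⟨a1, a2, a3⟩ := dd_spec j i (Ne.symm hij)
      obtain ⟨b1, b2, b3⟩ := dd_spec i (π j) hipj
      obtain ⟨c1, c2, c3⟩ := dd_spec j (π j) (Ne.symm hjne)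
      by_cases hc : (σ j) i ≤ (σ j) (π j)
      · have hlt := hiff.mp hc
        rw [if_pos hc]
        omega
      · have hnlt : ¬ dd m j i < dd m j (π j) := fun h => hc (hiff.mpr h)
        rw [if_neg hc]
        omega
    have hsum := Finset.sum_congr rfl hterm
    rw [Finset.sum_add_distrib, Finset.sum_add_distrib, ← Finset.mul_sum,
      Finset.sum_add_distrib, Finset.sum_const, smul_eq_mul] at hsum
    have hre : ∑ j ∈ nf, dd m i (π j) = ∑ j ∈ nf, dd m i j := by
      apply Finset.sum_equiv π
      · intro j
        simp only [hnf, Finset.mem_filter, Finset.mem_univ, true_and]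
        constructor
        · intro h e
          exact h (π.injective e)
        · intro h e
          exact h (by simp [e])
      · intro j _
        rfl
    have hpair : ∑ j ∈ nf, dd m j i + ∑ j ∈ nf, dd m i j = nf.card * m := by
      rw [← Finset.sum_add_distrib]
      have : ∀ j ∈ nf, dd m j i + dd m i j = m := by
        intro j hj
        have hjne : π j ≠ j := by
          simpa [hnf, Finset.mem_filter] using hj
        have hij : j ≠ i := fun e => hjne (by rw [e, hi])
        exact dd_add j i hij
      rw [Finset.sum_congr rfl this, Finset.sum_const, smul_eq_mul]
    rw [hre] at hsum
    omega
  have hS : (∑ j ∈ nf, (if (σ j) i₁ ≤ (σ j) (π j) then 1 else 0)) =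
      ∑ j ∈ nf, (if (σ j) i₂ ≤ (σ j) (π j) then 1 else 0) :=
    Nat.eq_of_mul_eq_mul_left (by omega) ((key i₁ h1).trans (key i₂ h2).symm)
  have hcard : ∀ i : Fin m,
      (Finset.univ.filter fun k => π k = k ∧ k ≠ i ∧ gP a π k = 0).card = 0 := by
    intro i
    rw [Finset.card_eq_zero, Finset.filter_eq_empty_iff]
    rintro k - ⟨hk, -, hk0⟩
    rw [gP] at hk0
    simp only [if_pos hk] at hk0
    exact one_ne_zero hk0
  have hg1 : gP a π i₁ = 1 := by simp [gP, h1]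
  have hg2 : gP a π i₂ = 1 := by simp [gP, h2]
  unfold IncMap
  rw [hg1, hg2, if_pos rfl, hv0, hv0, hcard, hcard]
  rw [show (Finset.univ.filter fun j => π j ≠ j) = nf from rfl, hS]
end

section
/- Let (v, a) be a product two-action game with m players. Then the number of Nash equilibria γ ∈ [0,1]^m with 0 < γ_i < 1 for every i (totally mixed Nash equilibria) is exactly !m. -/
open Finset
open scoped Classical

/-- A product two-action game has exactly `!m` totally mixed Nash
equilibria. -/
theorem stmt16 {m : ℕ} (hm : 1 ≤ m) (v : Fin m → ℕ) (hv : ∀ i, v i ≤ 1)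
    (a : Fin m → Fin m → ℝ) (ha : GoodCoef a) :
    {γ : Fin m → ℝ | IsNashP v a γ ∧ ∀ i, 0 < γ i ∧ γ i < 1}.Finite ∧
    {γ : Fin m → ℝ | IsNashP v a γ ∧ ∀ i, 0 < γ i ∧ γ i < 1}.ncard
      = numDerangements m := by
  classical
  set F : Equiv.Perm (Fin m) → (Fin m → ℝ) := fun π j => a (π j) j with hF
  have hSeq : {γ : Fin m → ℝ | IsNashP v a γ ∧ ∀ i, 0 < γ i ∧ γ i < 1}
      = F '' (derangements (Fin m)) := by
    ext γ
    constructor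
    · rintro ⟨⟨⟨hcube, heq⟩, -, -⟩, hopen⟩
      have hex : ∀ i, ∃ j, j ≠ i ∧ γ j = a i j := by
        intro i
        have h0 := heq i (hopen i).1 (hopen i).2
        unfold lamP at h0
        have hpow : ((-1 : ℝ) ^ (v i)) ≠ 0 := pow_ne_zero _ (by norm_num)
        have hprod : ∏ j ∈ Finset.univ.erase i, (γ j - a i j) = 0 := by
          rcases mul_eq_zero.1 h0 with h | h
          · exact absurd h hpow
          · exact h
        obtain ⟨j, hj, hj0⟩ := Finset.prod_eq_zero_iff.1 hprod
        exact ⟨j, Finset.ne_of_mem_erase hj, by linarith⟩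
      choose h hne hval using hex
      have hinj : Function.Injective h := by
        intro i₁ i₂ he
        by_contra hne'
        exact ha.2 (h i₁) i₁ i₂ (Ne.symm (hne i₁)) (he ▸ Ne.symm (hne i₂)) hne'
          (by rw [← hval i₁, he, hval i₂])
      have hbij : Function.Bijective h := Finite.injective_iff_bijective.1 hinj
      set π : Equiv.Perm (Fin m) := Equiv.ofBijective h hbij with hπ
      refine ⟨π.symm, ?_, ?_⟩
      · intro j hj
        have : h (π.symm j) = j := π.apply_symm_apply j
        rw [hj] at this
        exact hne j this
      · funext j
        have hh : h (π.symm j) = j := π.apply_symm_apply j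
        have hv2 := hval (π.symm j)
        rw [hh] at hv2
        simpa [hF] using hv2.symm
    · rintro ⟨π, hπ, rfl⟩
      have hbd : ∀ j, 0 < a (π j) j ∧ a (π j) j < 1 := fun j => ha.1 (π j) j (hπ j)
      refine ⟨⟨⟨fun j => ⟨(hbd j).1.le, (hbd j).2.le⟩, ?_⟩, ?_, ?_⟩, fun j => hbd j⟩
      · intro i _ _
        have hmem : π.symm i ∈ Finset.univ.erase i := by
          refine Finset.mem_erase.2 ⟨?_, Finset.mem_univ _⟩
          intro hcon
          have hc := congrArg π hcon
          rw [π.apply_symm_apply] at hc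
          exact hπ i hc.symm
        unfold lamP
        rw [Finset.prod_eq_zero hmem (by simp [hF, π.apply_symm_apply]), mul_zero]
      · intro i hi; exact absurd hi (by simpa [hF] using (hbd i).1.ne')
      · intro i hi; exact absurd hi (by simpa [hF] using (hbd i).2.ne)
  have hinjOn : Set.InjOn F (derangements (Fin m)) := by
    intro π₁ h₁ π₂ h₂ he
    refine Equiv.ext fun j => ?_
    by_contra hne
    exact ha.2 j (π₁ j) (π₂ j) (h₁ j) (h₂ j) hne (congrFun he j)
  constructor
  · rw [hSeq]; exact (Set.toFinite _).image F
  · rw [hSeq, Set.ncard_image_of_injOn hinjOn, ← card_derangements_fin_eq_numDerangements,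
      Set.ncard_eq_toFinset_card']
    simp [Set.toFinset_card]
end

section
/- Let (v, a) be a product two-action game with m players and let 1 ≤ l ≤ m. Then the number of Nash equilibria γ ∈ [0,1]^m with exactly l coordinates in {0,1} is at most binom(m,l)·2^{l−1}·!(m−l); and if the game is maximal, this number equals binom(m,l)·2^{l−1}·!(m−l). -/
open Finset
open scoped Classical

/-!
An equilibrium candidate `γ` lies in `EC(π)` for exactly one permutation `π`: at an interior
coordinate `i`, `λ^i(γ) = 0` forces `γ_j = a^i_j` for some `j ≠ i`, and since the `a^i_j` lie in
`(0,1)` and are distinct in `i`, the map `i ↦ j` permutes the interior coordinates. The binary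
coordinates of `γ` are then exactly the fixed points of `π`, so the Nash equilibria with `l` binary
coordinates are split among the `binom(m,l)·!(m−l)` permutations with `l` fixed points.
Inside `EC(π)`, a set of `2^l` points, flipping a fixed coordinate `γ_i ↦ 1 − γ_i` leaves `λ^i`
unchanged and nonzero, while a Nash equilibrium has `γ_i = 1` exactly when `λ^i > 0`; so at most
one point of each flipped pair is a Nash equilibrium.
-/

open Equiv

section Derangements

variable {α : Type*} [Fintype α] [DecidableEq α]

lemma card_perm_filter_fixed_eq (S : Finset α) :
    #(univ.filter fun σ : Perm α => univ.filter (fun x => σ x = x) = S)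
      = numDerangements (Fintype.card α - #S) := by
  have hfixed : ∀ σ : Perm α,
      univ.filter (fun x => σ x = x) = S ↔ ∀ x, ¬x ∉ S ↔ x ∈ Function.fixedPoints σ := by
    intro σ
    simp only [not_not, Function.mem_fixedPoints, Function.IsFixedPt, Finset.ext_iff,
      mem_filter, mem_univ, true_and]
    exact forall_congr' fun x => Iff.comm
  rw [← Fintype.card_subtype, Fintype.card_congr (Equiv.subtypeEquivRight hfixed),
    ← Fintype.card_congr (derangements.subtypeEquiv (· ∉ S)),
    card_derangements_eq_numDerangements, Fintype.card_subtype_compl, Fintype.card_coe]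

lemma card_perm_filter_card_fixed_eq (l : ℕ) :
    #(univ.filter fun σ : Perm α => #(univ.filter fun x => σ x = x) = l)
      = (Fintype.card α).choose l * numDerangements (Fintype.card α - l) := by
  rw [card_eq_sum_card_fiberwise (f := fun σ : Perm α => univ.filter fun x => σ x = x)
    (t := powersetCard l univ)
    (fun σ hσ => mem_powersetCard.2 ⟨subset_univ _, (mem_filter.1 hσ).2⟩)]
  rw [sum_congr rfl fun S hS => ?_, sum_const, card_powersetCard, card_univ, smul_eq_mul]
  rw [filter_filter, ← (mem_powersetCard.1 hS).2, ← card_perm_filter_fixed_eq S]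
  exact congrArg card (filter_congr fun σ _ => ⟨And.right, fun h => ⟨h ▸ rfl, h⟩⟩)

end Derangements

lemma two_mul_ncard_le_of_disjoint_image {α : Type*} {s t : Set α} {f : α → α} (ht : t.Finite)
    (hf : Set.InjOn f s) (hst : s ⊆ t) (hft : Set.MapsTo f s t) (hdisj : Disjoint s (f '' s)) :
    2 * s.ncard ≤ t.ncard := by
  have hs : s.Finite := ht.subset hst
  calc 2 * s.ncard = (s ∪ f '' s).ncard := by
        rw [Set.ncard_union_eq hdisj hs (hs.image f), hf.ncard_image, two_mul]
    _ ≤ t.ncard := Set.ncard_le_ncard (Set.union_subset hst hft.image_subset) ht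

section Game

variable {m : ℕ} {v : Fin m → ℕ} {a : Fin m → Fin m → ℝ} {π : Perm (Fin m)} {γ : Fin m → ℝ}

lemma GoodCoef.ne_of_eq_zero_or_eq_one (ha : GoodCoef a) {i j : Fin m} (hij : i ≠ j) {x : ℝ}
    (hx : x = 0 ∨ x = 1) : x ≠ a i j := by
  obtain ⟨h0, h1⟩ := ha.1 i j hij
  rcases hx with rfl | rfl <;> intro h <;> linarith

lemma eq_zero_or_eq_one_iff_of_mem_ECset (ha : GoodCoef a) (hγ : γ ∈ ECset a π) (j : Fin m) :
    (γ j = 0 ∨ γ j = 1) ↔ π j = j := by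
  refine ⟨fun hb => ?_, hγ.2.1 j⟩
  by_contra hj
  exact ha.ne_of_eq_zero_or_eq_one hj hb (hγ.2.2 j hj)

lemma eq_of_mem_ECset (ha : GoodCoef a) {π₁ π₂ : Perm (Fin m)} (h₁ : γ ∈ ECset a π₁)
    (h₂ : γ ∈ ECset a π₂) : π₁ = π₂ := by
  refine Equiv.ext fun j => ?_
  have hiff := (eq_zero_or_eq_one_iff_of_mem_ECset ha h₁ j).symm.trans
    (eq_zero_or_eq_one_iff_of_mem_ECset ha h₂ j)
  by_cases hj₁ : π₁ j = j
  · rw [hj₁, hiff.1 hj₁]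
  have hj₂ : π₂ j ≠ j := mt hiff.2 hj₁
  by_contra hne
  exact ha.2 j _ _ hj₁ hj₂ hne ((h₁.2.2 j hj₁).symm.trans (h₂.2.2 j hj₂))

lemma lamP_ne_zero_of_mem_ECset (ha : GoodCoef a) (hγ : γ ∈ ECset a π) {k : Fin m}
    (hk : π k = k) : lamP v a k γ ≠ 0 := by
  refine mul_ne_zero (pow_ne_zero _ (by norm_num))
    (prod_ne_zero_iff.2 fun j hj => sub_ne_zero.2 ?_)
  have hjk : j ≠ k := ne_of_mem_erase hj
  by_cases hj' : π j = j
  · exact ha.ne_of_eq_zero_or_eq_one hjk.symm (hγ.2.1 j hj')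
  · rw [hγ.2.2 j hj']
    exact ha.2 j (π j) k hj' hjk.symm fun h => hjk (π.injective (h.trans hk.symm))

lemma InCube.eq_zero_or_eq_one (h : InCube γ) {i : Fin m} (hi : ¬(0 < γ i ∧ γ i < 1)) :
    γ i = 0 ∨ γ i = 1 := by
  rcases (h i).1.eq_or_lt with h0 | h0
  · exact Or.inl h0.symm
  · exact Or.inr (le_antisymm (h i).2 (not_lt.1 fun h1 => hi ⟨h0, h1⟩))

lemma IsEqCand.exists_mem_ECset (ha : GoodCoef a) (h : IsEqCand v a γ) :
    ∃ π, γ ∈ ECset a π := by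
  obtain ⟨hcube, hlam⟩ := h
  have hpartner : ∀ i, 0 < γ i ∧ γ i < 1 → ∃ j, j ≠ i ∧ γ j = a i j := by
    rintro i ⟨h0, h1⟩
    obtain ⟨j, hj, hj0⟩ := prod_eq_zero_iff.1
      ((mul_eq_zero.1 (hlam i h0 h1)).resolve_left (pow_ne_zero _ (by norm_num)))
    exact ⟨j, ne_of_mem_erase hj, sub_eq_zero.1 hj0⟩
  choose! p hp_ne hp_eq using hpartner
  let I := {i // 0 < γ i ∧ γ i < 1}
  let g : I → I := fun i => ⟨p i, by rw [hp_eq i i.2]; exact ha.1 i (p i) (hp_ne i i.2).symm⟩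
  have hg : Function.Injective g := by
    intro x y hxy
    have hp : p x = p y := congrArg Subtype.val hxy
    by_contra hne
    exact ha.2 (p x) x y (hp_ne x x.2).symm (hp ▸ (hp_ne y y.2).symm) (fun h => hne (Subtype.ext h))
      ((hp_eq x x.2).symm.trans (hp ▸ hp_eq y y.2))
  let e := Equiv.ofBijective g (Finite.injective_iff_bijective.1 hg)
  have hπ_int : ∀ j (hj : 0 < γ j ∧ γ j < 1),
      Perm.ofSubtype e.symm j ≠ j ∧ γ j = a (Perm.ofSubtype e.symm j) j := by
    intro j hj
    have hpi : p (e.symm ⟨j, hj⟩) = j := congrArg Subtype.val (e.apply_symm_apply ⟨j, hj⟩)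
    rw [Perm.ofSubtype_apply_of_mem (a := j) _ hj]
    refine ⟨fun h => hp_ne _ (e.symm ⟨j, hj⟩).2 (hpi.trans h.symm), ?_⟩
    have := hp_eq _ (e.symm ⟨j, hj⟩).2
    rwa [hpi] at this
  refine ⟨Perm.ofSubtype e.symm, hcube, fun j hj => ?_, fun j hj => ?_⟩
  · exact hcube.eq_zero_or_eq_one fun hint => (hπ_int j hint).1 hj
  · by_cases hint : 0 < γ j ∧ γ j < 1
    · exact (hπ_int j hint).2
    · exact absurd (Perm.ofSubtype_apply_of_not_mem (a := j) _ hint) hj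

lemma IsNashP.eq_one_iff_pos (h : IsNashP v a γ) {i : Fin m} (hb : γ i = 0 ∨ γ i = 1)
    (hne : lamP v a i γ ≠ 0) : γ i = 1 ↔ 0 < lamP v a i γ := by
  rcases hb with h0 | h1
  · simp only [h0, zero_ne_one, false_iff, not_lt]
    exact h.2.1 i h0
  · simp only [h1, true_iff]
    exact (h.2.2 i h1).lt_of_ne hne.symm

lemma lamP_update_self (i : Fin m) (x : ℝ) : lamP v a i (Function.update γ i x) = lamP v a i γ :=
  congrArg (_ * ·) (prod_congr rfl fun _ hj => by rw [Function.update_of_ne (ne_of_mem_erase hj)])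

lemma update_one_sub_mem_ECset (hγ : γ ∈ ECset a π) {i : Fin m} (hi : π i = i) :
    Function.update γ i (1 - γ i) ∈ ECset a π := by
  obtain ⟨hcube, hfix, hmove⟩ := hγ
  refine ⟨fun j => ?_, fun j hj => ?_, fun j hj => ?_⟩
  · rcases eq_or_ne j i with rfl | hji
    · simp only [Function.update_self]
      constructor <;> linarith [hcube j]
    · rw [Function.update_of_ne hji]
      exact hcube j
  · rcases eq_or_ne j i with rfl | hji
    · simp only [Function.update_self]
      rcases hfix j hj with h | h <;> rw [h] <;> norm_num
    · rw [Function.update_of_ne hji]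
      exact hfix j hj
  · rw [Function.update_of_ne (fun h : j = i => hj (h ▸ hi))]
    exact hmove j hj

lemma ECset_subset_piFinset (π : Perm (Fin m)) :
    ECset a π ⊆
      ↑(Fintype.piFinset fun j => if π j = j then ({0, 1} : Finset ℝ) else {a (π j) j}) := by
  rintro γ ⟨-, hfix, hmove⟩
  refine Fintype.mem_piFinset.2 fun j => ?_
  split_ifs with hj
  · simpa using hfix j hj
  · simpa using hmove j hj

lemma ECset_finite (π : Perm (Fin m)) : (ECset a π).Finite :=
  (finite_toSet _).subset (ECset_subset_piFinset π)

lemma ncard_ECset_le (π : Perm (Fin m)) : (ECset a π).ncard ≤ 2 ^ fixedCard π := by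
  refine (Set.ncard_le_ncard (ECset_subset_piFinset π) (finite_toSet _)).trans_eq ?_
  rw [Set.ncard_coe_finset, Fintype.card_piFinset, fixedCard, prod_apply_ite, prod_const]
  simp

lemma ncard_nash_inter_ECset_le (ha : GoodCoef a) {i : Fin m} (hi : π i = i) :
    {γ ∈ ECset a π | IsNashP v a γ}.ncard ≤ 2 ^ (fixedCard π - 1) := by
  set flip : (Fin m → ℝ) → Fin m → ℝ := fun γ => Function.update γ i (1 - γ i)
  have hflip_inj : Function.Injective flip := by
    refine Function.LeftInverse.injective (g := flip) fun γ => ?_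
    simp [flip]
  have hdisj : Disjoint {γ ∈ ECset a π | IsNashP v a γ}
      (flip '' {γ ∈ ECset a π | IsNashP v a γ}) := by
    refine Set.disjoint_left.2 ?_
    rintro _ ⟨hγ, hγN⟩ ⟨δ, ⟨hδ, hδN⟩, rfl⟩
    have hlam : lamP v a i (flip δ) = lamP v a i δ := lamP_update_self i _
    have hne := lamP_ne_zero_of_mem_ECset (v := v) ha hδ hi
    have hδi := (hγN.eq_one_iff_pos (hγ.2.1 i hi) (hlam ▸ hne)).trans
      (hlam ▸ (hδN.eq_one_iff_pos (hδ.2.1 i hi) hne).symm)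
    simp only [flip, Function.update_self] at hδi
    rcases hδ.2.1 i hi with h | h <;> rw [h] at hδi <;> norm_num at hδi
  have hcard := two_mul_ncard_le_of_disjoint_image (ECset_finite π) hflip_inj.injOn
    (Set.sep_subset _ _) (fun γ hγ => update_one_sub_mem_ECset hγ.1 hi) hdisj
  have hpos : 0 < fixedCard π := card_pos.2 ⟨i, mem_filter.2 ⟨mem_univ _, hi⟩⟩
  have hEC := ncard_ECset_le (a := a) π
  rw [← Nat.two_pow_pred_mul_two hpos] at hEC
  omega

lemma setOf_nash_card_eq_biUnion (ha : GoodCoef a) (l : ℕ) :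
    {γ : Fin m → ℝ | IsNashP v a γ ∧ #(univ.filter fun i => γ i = 0 ∨ γ i = 1) = l}
      = ⋃ π ∈ (↑(univ.filter fun π : Perm (Fin m) => fixedCard π = l) : Set (Perm (Fin m))),
          {γ ∈ ECset a π | IsNashP v a γ} := by
  ext γ
  simp only [Set.mem_ofPred_eq, Set.mem_iUnion, coe_filter, mem_univ, true_and, exists_prop]
  constructor
  · rintro ⟨hN, hl⟩
    obtain ⟨π, hπ⟩ := hN.1.exists_mem_ECset ha
    exact ⟨π, hl ▸ congrArg card (filter_congr fun i _ =>
      eq_zero_or_eq_one_iff_of_mem_ECset ha hπ i).symm, hπ, hN⟩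
  · rintro ⟨π, hl, hπ, hN⟩
    exact ⟨hN, hl ▸ congrArg card (filter_congr fun i _ =>
      eq_zero_or_eq_one_iff_of_mem_ECset ha hπ i)⟩

end Game

theorem stmt17_general {m : ℕ} (v : Fin m → ℕ)
    (a : Fin m → Fin m → ℝ) (ha : GoodCoef a) (l : ℕ) (hl1 : 1 ≤ l) :
    {γ : Fin m → ℝ | IsNashP v a γ ∧
        (Finset.univ.filter fun i => γ i = 0 ∨ γ i = 1).card = l}.Finite ∧
    {γ : Fin m → ℝ | IsNashP v a γ ∧
        (Finset.univ.filter fun i => γ i = 0 ∨ γ i = 1).card = l}.ncard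
      ≤ Nat.choose m l * 2 ^ (l - 1) * numDerangements (m - l) ∧
    (IsMaximal v a →
      {γ : Fin m → ℝ | IsNashP v a γ ∧
          (Finset.univ.filter fun i => γ i = 0 ∨ γ i = 1).card = l}.ncard
        = Nat.choose m l * 2 ^ (l - 1) * numDerangements (m - l)) := by
  set P := univ.filter fun π : Perm (Fin m) => fixedCard π = l
  have hP : #P = m.choose l * numDerangements (m - l) :=
    (card_perm_filter_card_fixed_eq l).trans (by rw [Fintype.card_fin])
  have hfixed : ∀ π ∈ P, ∃ i, π i = i := fun π hπ => by
    obtain ⟨i, hi⟩ := card_pos.1 (hl1.trans_eq (mem_filter.1 hπ).2.symm)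
    exact ⟨i, (mem_filter.1 hi).2⟩
  have hfin : ∀ π ∈ (P : Set (Perm (Fin m))), {γ ∈ ECset a π | IsNashP v a γ}.Finite :=
    fun π _ => (ECset_finite π).subset (Set.sep_subset _ _)
  have hdisj : (P : Set (Perm (Fin m))).PairwiseDisjoint
      fun π => {γ ∈ ECset a π | IsNashP v a γ} :=
    fun _ _ _ _ hne => Set.disjoint_left.2 fun _ h₁ h₂ => hne (eq_of_mem_ECset ha h₁.1 h₂.1)
  have hsum : ∑ _π ∈ P, 2 ^ (l - 1) = m.choose l * 2 ^ (l - 1) * numDerangements (m - l) := by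
    rw [sum_const, hP, smul_eq_mul]
    ring
  rw [setOf_nash_card_eq_biUnion ha l, P.finite_toSet.ncard_biUnion hfin hdisj,
    finsum_mem_coe_finset]
  refine ⟨P.finite_toSet.biUnion hfin, hsum ▸ sum_le_sum fun π hπ => ?_,
    fun hmax => hsum ▸ sum_congr rfl fun π hπ => ?_⟩
  · obtain ⟨i, hi⟩ := hfixed π hπ
    exact (mem_filter.1 hπ).2 ▸ ncard_nash_inter_ECset_le ha hi
  · exact (mem_filter.1 hπ).2 ▸ hmax π (hfixed π hπ)

/-- For `1 ≤ l ≤ m`, the number of Nash equilibria with exactly `l`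
coordinates in `{0,1}` is at most `binom(m,l)·2^{l−1}·!(m−l)`, with equality for a
maximal game. -/
theorem stmt17 {m : ℕ} (hm : 1 ≤ m) (v : Fin m → ℕ) (hv : ∀ i, v i ≤ 1)
    (a : Fin m → Fin m → ℝ) (ha : GoodCoef a) (l : ℕ) (hl1 : 1 ≤ l) (hlm : l ≤ m) :
    {γ : Fin m → ℝ | IsNashP v a γ ∧
        (Finset.univ.filter fun i => γ i = 0 ∨ γ i = 1).card = l}.Finite ∧
    {γ : Fin m → ℝ | IsNashP v a γ ∧
        (Finset.univ.filter fun i => γ i = 0 ∨ γ i = 1).card = l}.ncard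
      ≤ Nat.choose m l * 2 ^ (l - 1) * numDerangements (m - l) ∧
    (IsMaximal v a →
      {γ : Fin m → ℝ | IsNashP v a γ ∧
          (Finset.univ.filter fun i => γ i = 0 ∨ γ i = 1).card = l}.ncard
        = Nat.choose m l * 2 ^ (l - 1) * numDerangements (m - l)) :=
  stmt17_general v a ha l hl1
end

section
/- Let λ^1, …, λ^m be a two-action game such that λ^i(s) ≠ 0 for every i ∈ {1,…,m} and every vertex s ∈ {0,1}^m. Then at most 2^{m−1} of the 2^m points of {0,1}^m are Nash equilibria. -/
open Finset
open scoped Classical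

/-- A two-action game: each `lam i` does not depend on the `i`-th coordinate. -/
def IndepOfOwn {m : ℕ} (lam : Fin m → (Fin m → ℝ) → ℝ) : Prop :=
  ∀ (i : Fin m) (γ γ' : Fin m → ℝ), (∀ j, j ≠ i → γ j = γ' j) → lam i γ = lam i γ'

/-- Nash equilibrium of a two-action game given by the functions `lam i`:
`γ ∈ [0,1]^m`, `lam i γ = 0` when `0 < γ i < 1`, `lam i γ ≤ 0` when `γ i = 0`,
and `lam i γ ≥ 0` when `γ i = 1`. -/
def IsNashG {m : ℕ} (lam : Fin m → (Fin m → ℝ) → ℝ) (γ : Fin m → ℝ) : Prop :=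
  (∀ i, 0 ≤ γ i ∧ γ i ≤ 1) ∧
  (∀ i, 0 < γ i → γ i < 1 → lam i γ = 0) ∧
  (∀ i, γ i = 0 → lam i γ ≤ 0) ∧
  (∀ i, γ i = 1 → 0 ≤ lam i γ)

/-- If `lam i s ≠ 0` at every vertex `s ∈ {0,1}^m`, then at most `2^{m−1}`
of the `2^m` vertices are Nash equilibria. -/
theorem stmt19 {m : ℕ} (hm : 1 ≤ m) (lam : Fin m → (Fin m → ℝ) → ℝ)
    (hind : IndepOfOwn lam)
    (hvert : ∀ (i : Fin m) (s : Fin m → ℝ), (∀ j, s j = 0 ∨ s j = 1) → lam i s ≠ 0) :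
    {γ : Fin m → ℝ | (∀ i, γ i = 0 ∨ γ i = 1) ∧ IsNashG lam γ}.ncard
      ≤ 2 ^ (m - 1) := by
  have hmpos : 0 < m := hm
  set i0 : Fin m := ⟨0, hmpos⟩ with hi0
  -- vertex set
  set V : Set (Fin m → ℝ) := {γ | ∀ i, γ i = 0 ∨ γ i = 1} with hV
  set S : Set (Fin m → ℝ) := {γ | (∀ i, γ i = 0 ∨ γ i = 1) ∧ IsNashG lam γ} with hS
  -- encoding of vertices by booleans
  set g : (Fin m → Bool) → (Fin m → ℝ) := fun b i => if b i then 1 else 0 with hg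
  have hVrange : V ⊆ Set.range g := by
    intro γ hγ
    refine ⟨fun i => if γ i = 1 then true else false, ?_⟩
    funext i
    rcases hγ i with h | h <;> simp [hg, h]
  have hVfin : V.Finite := (Set.finite_range g).subset hVrange
  have hVcard : V.ncard ≤ 2 ^ m := by
    calc V.ncard ≤ (Set.range g).ncard :=
          Set.ncard_le_ncard hVrange (Set.finite_range g)
    _ = Nat.card (Set.range g) := (Nat.card_coe_set_eq _).symm
    _ ≤ Nat.card (Fin m → Bool) := Finite.card_range_le g
    _ = 2 ^ m := by simp [Nat.card_eq_fintype_card]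
  -- the flip map
  set f : (Fin m → ℝ) → (Fin m → ℝ) := fun γ j => if j = i0 then 1 - γ j else γ j with hf
  have hSsubV : S ⊆ V := fun γ hγ => hγ.1
  have hfV : ∀ γ ∈ V, f γ ∈ V := by
    intro γ hγ i
    simp only [hf]
    split
    · rcases hγ i with h0 | h0 <;> simp [h0]
    · exact hγ i
  have hlamf : ∀ γ, lam i0 (f γ) = lam i0 γ := by
    intro γ
    apply hind i0
    intro j hj
    simp [hf, hj]
  have hfinj : Function.Injective f := by
    intro a b hab
    funext j
    by_cases h : j = i0
    · have h2 : 1 - a i0 = 1 - b i0 := by simpa [hf] using congrFun hab i0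
      rw [h]; linarith
    · simpa [hf, h] using congrFun hab j
  -- f maps S into V \ S
  have hfS : ∀ γ ∈ S, f γ ∈ V \ S := by
    intro γ hγ
    refine ⟨hfV γ hγ.1, ?_⟩
    intro hfγ
    have hne := hvert i0 γ hγ.1
    have hlam := hlamf γ
    rcases hγ.1 i0 with h0 | h1
    · -- γ i0 = 0, so lam i0 γ < 0; f γ i0 = 1 needs lam ≥ 0
      have h1' : f γ i0 = 1 := by simp [hf, h0]
      have hle : lam i0 γ ≤ 0 := hγ.2.2.2.1 i0 h0
      have hge : 0 ≤ lam i0 (f γ) := hfγ.2.2.2.2 i0 h1'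
      rw [hlam] at hge
      exact hne (le_antisymm hle hge)
    · have h0' : f γ i0 = 0 := by simp [hf, h1]
      have hge : 0 ≤ lam i0 γ := hγ.2.2.2.2 i0 h1
      have hle : lam i0 (f γ) ≤ 0 := hfγ.2.2.2.1 i0 h0'
      rw [hlam] at hle
      exact hne (le_antisymm hle hge)
  have hSfin : S.Finite := hVfin.subset hSsubV
  have himg : (f '' S).ncard = S.ncard :=
    Set.ncard_image_of_injective S hfinj
  have hdisj : Disjoint S (f '' S) := by
    rw [Set.disjoint_right]
    rintro x ⟨γ, hγ, rfl⟩
    exact fun hx => (hfS γ hγ).2 hx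
  have hub : S ∪ f '' S ⊆ V := by
    rintro x (hx | ⟨γ, hγ, rfl⟩)
    · exact hSsubV hx
    · exact (hfS γ hγ).1
  have hsum : S.ncard + S.ncard ≤ 2 ^ m := by
    calc S.ncard + S.ncard = S.ncard + (f '' S).ncard := by rw [himg]
    _ = (S ∪ f '' S).ncard := (Set.ncard_union_eq hdisj hSfin (hSfin.image f)).symm
    _ ≤ V.ncard := Set.ncard_le_ncard hub hVfin
    _ ≤ 2 ^ m := hVcard
  have h2 : 2 ^ m = 2 * 2 ^ (m - 1) := by
    rw [← pow_succ']
    congr 1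
    omega
  omega
end
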